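/- arXiv:1504.01283 — 6 statements merged into one kernel-verified Lean document; each statement's English description precedes it below -/
import Mathlib

section
/- For every signed permutation w ∈ B_n, sDes(w) = sDes(Q^B(w)), where (P^B(w), Q^B(w)) is the pair of standard Young bitableaux associated to w by the type B Robinson–Schensted correspondence, and also P^B(w⁻¹) = Q^B(w). -/
open Finset

/-- An element of the hyperoctahedral group `B_n` is modeled as a permutation `w` of
`Fin n × Bool` (the pair `(i, b)` representing the letter `i+1`, barred iff `b = true`)
commuting with the bar involution. -/
def IsSignedPerm {n : ℕ} (w : Equiv.Perm (Fin n × Bool)) : Prop :=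
  ∀ p : Fin n × Bool, w (p.1, !p.2) = ((w p).1, !(w p).2)

/-- The letter `w(p+1)` of the signed permutation `w`, written in one-line notation, as a
pair (absolute value minus 1, barred?); junk value for `p ≥ n`. -/
def oneLine {n : ℕ} (w : Equiv.Perm (Fin n × Bool)) (p : ℕ) : ℕ × Bool :=
  if h : p < n then (((w (⟨p, h⟩, false)).1 : ℕ), (w (⟨p, h⟩, false)).2) else (0, false)

/-- The rank of a letter in the total order `1̄ <_r ⋯ <_r n̄ <_r 1 <_r ⋯ <_r n`. -/
def rOrd (n : ℕ) (v : ℕ × Bool) : ℕ :=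
  if v.2 then v.1 else n + v.1

/-- The signed (colored) descent set `sDes(w)` of a signed permutation, encoded as a word
`ℕ → Option Bool`: position `p` (0-based, representing `s = p+1`) carries `some b` iff
`s ∈ S`, where `S` consists of `n` together with all `s ∈ [n−1]` such that either
`w(s) >_r w(s+1)` or `w(s)` is barred and `w(s+1)` is unbarred, and `b = true` iff
`w(s)` is barred. -/
def sDesPerm {n : ℕ} (w : Equiv.Perm (Fin n × Bool)) : ℕ → Option Bool := fun p =>
  if p + 1 = n then some (oneLine w p).2
  else if p + 1 < n ∧ (rOrd n (oneLine w (p + 1)) < rOrd n (oneLine w p) ∨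
      ((oneLine w p).2 = true ∧ (oneLine w (p + 1)).2 = false))
    then some (oneLine w p).2 else none

/-- Schensted row insertion: insert `x` into a row, returning the new row and the
bumped entry (if any). -/
def insertRow : List ℕ → ℕ → List ℕ × Option ℕ
  | [], x => ([x], none)
  | y :: t, x =>
      if x < y then (x :: t, some y)
      else
        let r := insertRow t x
        (y :: r.1, r.2)

/-- Schensted insertion of `x` into a tableau (a list of rows). -/
def insertTableau : List (List ℕ) → ℕ → List (List ℕ)
  | [], x => [[x]]
  | r :: rs, x =>
      match insertRow r x with
      | (r', none) => r' :: rs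
      | (r', some y) => r' :: insertTableau rs y

/-- Place the entry `k` at the end of row `i` of a tableau (creating a new row if
needed). -/
def placeEntry : List (List ℕ) → ℕ → ℕ → List (List ℕ)
  | [], _, k => [[k]]
  | r :: t, 0, k => (r ++ [k]) :: t
  | r :: t, i + 1, k => r :: placeEntry t i k

/-- The index of the first row in which two tableaux differ in length (the row where a
new cell was created by an insertion). -/
def newCellRow : List (List ℕ) → List (List ℕ) → ℕ
  | _, [] => 0
  | [], _ :: _ => 0
  | r :: t, r' :: t' => if r.length = r'.length then newCellRow t t' + 1 else 0

/-- The Robinson–Schensted correspondence applied to a two-line array, given as a list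
of pairs (top entry, bottom entry): the bottom entries are Schensted-inserted into the
insertion tableau `P` while the top entries record the growth in the recording
tableau `Q`.  Returns `(P, Q)`. -/
def robinsonSchensted (l : List (ℕ × ℕ)) : List (List ℕ) × List (List ℕ) :=
  l.foldl
    (fun pq pv =>
      let p' := insertTableau pq.1 pv.2
      (p', placeEntry pq.2 (newCellRow pq.1 p') pv.1))
    ([], [])

/-- The (0-based) index of the row of the tableau `q` containing the entry `v`. -/
def rowOfEntry (q : List (List ℕ)) (v : ℕ) : ℕ :=
  q.findIdx fun r => r.contains v

/-- The two-line array of positions and absolute values of the letters of `w` of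
bar-status `barred`, in increasing order of position. -/
def twoLine {n : ℕ} (w : Equiv.Perm (Fin n × Bool)) (barred : Bool) : List (ℕ × ℕ) :=
  ((List.range n).filter fun p => (oneLine w p).2 = barred).map
    fun p => (p + 1, (oneLine w p).1 + 1)

/-- The type B Robinson–Schensted insertion bitableau
`P^B(w) = (P⁺, P⁻)` of a signed permutation `w`. -/
def PB {n : ℕ} (w : Equiv.Perm (Fin n × Bool)) : (List (List ℕ)) × (List (List ℕ)) :=
  ((robinsonSchensted (twoLine w false)).1, (robinsonSchensted (twoLine w true)).1)

/-- The type B Robinson–Schensted recording bitableau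
`Q^B(w) = (Q⁺, Q⁻)` of a signed permutation `w`. -/
def QB {n : ℕ} (w : Equiv.Perm (Fin n × Bool)) : (List (List ℕ)) × (List (List ℕ)) :=
  ((robinsonSchensted (twoLine w false)).2, (robinsonSchensted (twoLine w true)).2)

/-- The signed descent set of a standard Young bitableau `(q⁺, q⁻)` of size `n`, encoded
as a word `ℕ → Option Bool`: `S` consists of `n` together with all `s ∈ [n−1]` such
that either `s, s+1` lie in the same tableau with `s+1` in a strictly lower row, or they
lie in different tableaux; the sign of `s` is `−` (`true`) iff `s` lies in `q⁻`. -/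
def sDesBitab (qp qm : List (List ℕ)) (n : ℕ) : ℕ → Option Bool := fun p =>
  let inM : ℕ → Bool := fun v => qm.any fun r => r.contains v
  let row : ℕ → ℕ := fun v => if inM v then rowOfEntry qm v else rowOfEntry qp v
  if p + 1 = n then some (inM (p + 1))
  else if p + 1 < n ∧ ((inM (p + 1) = inM (p + 2) ∧ row (p + 1) < row (p + 2)) ∨
      inM (p + 1) ≠ inM (p + 2))
    then some (inM (p + 1)) else none

/-!
Both halves reduce to ordinary Robinson–Schensted insertion applied to the two-line arrays of
the unbarred and of the barred letters of `w`.

Descents: the sign of `s` is recorded by the tableau of `Q^B(w)` that contains `s`, and when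
`s` and `s + 1` have different signs both sides have a descent at `s`. When they have the same
sign they are consecutive recording letters of one array, and by the row bumping lemma `s + 1`
lands in a strictly lower row exactly when the inserted letter decreases.

Inverse: since `w` commutes with the bar involution, the arrays of `w⁻¹` are the transposes of
those of `w`, and transposing an array swaps the two tableaux. For the latter, remove the pair
`(t, m)` with the largest inserted letter `m`. Inserting `m` only appends it to the first row,
and `t` exceeds every earlier recording letter, so that step is also the dual step, which
inserts `t` into the recording tableau and records `m` in the insertion tableau; and a dual
step commutes with every ordinary step whose inserted letter is smaller and whose recording
letter is larger.
-/

namespace TypeBRobinsonSchensted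

open List

theorem insertRow_cons (y : ℕ) (t : List ℕ) (x : ℕ) :
    insertRow (y :: t) x =
      if x < y then (x :: t, some y) else (y :: (insertRow t x).1, (insertRow t x).2) := by
  by_cases h : x < y <;> simp [insertRow, h]

theorem insertRow_append_of_forall_not_lt {R : List ℕ} {x : ℕ} (h : ∀ y ∈ R, ¬ x < y)
    (S : List ℕ) : insertRow (R ++ S) x = (R ++ (insertRow S x).1, (insertRow S x).2) := by
  induction R with
  | nil => rfl
  | cons y t ih => simp_all [insertRow_cons]

theorem insertRow_eq_append_of_forall_le {R : List ℕ} {x : ℕ} (h : ∀ y ∈ R, y ≤ x) :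
    insertRow R x = (R ++ [x], none) := by
  simpa [insertRow] using insertRow_append_of_forall_not_lt (fun y hy => not_lt.2 (h y hy)) []

theorem insertRow_append_of_some {R : List ℕ} {x z : ℕ} (h : (insertRow R x).2 = some z)
    (S : List ℕ) : insertRow (R ++ S) x = ((insertRow R x).1 ++ S, some z) := by
  induction R with
  | nil => simp [insertRow] at h
  | cons y t ih =>
    by_cases hxy : x < y
    · simp_all [insertRow_cons]
    · simp only [cons_append, insertRow_cons, if_neg hxy] at h ⊢
      simp [ih h]

theorem le_of_insertRow_eq_none {R : List ℕ} {x : ℕ} (h : (insertRow R x).2 = none) :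
    ∀ y ∈ R, y ≤ x := by
  induction R with
  | nil => simp
  | cons y t ih =>
    by_cases hxy : x < y
    · simp [insertRow_cons, hxy] at h
    · simp_all [insertRow_cons]

theorem insertRow_of_eq_none {R : List ℕ} {x : ℕ} (h : (insertRow R x).2 = none) :
    insertRow R x = (R ++ [x], none) :=
  insertRow_eq_append_of_forall_le (le_of_insertRow_eq_none h)

theorem length_insertRow_of_eq_some {R : List ℕ} {x z : ℕ} (h : (insertRow R x).2 = some z) :
    (insertRow R x).1.length = R.length := by
  induction R with
  | nil => simp [insertRow] at h
  | cons y t ih =>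
    by_cases hxy : x < y
    · simp [insertRow_cons, hxy]
    · simp only [insertRow_cons, if_neg hxy] at h ⊢
      simp [ih h]

theorem mem_of_insertRow_eq_some {R : List ℕ} {x z : ℕ} (h : (insertRow R x).2 = some z) :
    z ∈ R := by
  induction R with
  | nil => simp [insertRow] at h
  | cons y t ih =>
    by_cases hxy : x < y <;> simp_all [insertRow_cons]

theorem lt_of_insertRow_eq_some {R : List ℕ} {x z : ℕ} (h : (insertRow R x).2 = some z) :
    x < z := by
  induction R with
  | nil => simp [insertRow] at h
  | cons y t ih =>
    by_cases hxy : x < y <;> simp_all [insertRow_cons]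

theorem insertRow_perm (R : List ℕ) (x : ℕ) :
    (insertRow R x).1 ++ (insertRow R x).2.toList ~ x :: R := by
  induction R with
  | nil => simp [insertRow]
  | cons y t ih =>
    by_cases hxy : x < y
    · simp [insertRow_cons, hxy]
    · simpa [insertRow_cons, hxy] using (ih.cons y).trans (.swap x y t)

theorem pairwise_insertRow {R : List ℕ} (hR : R.Pairwise (· ≤ ·)) (x : ℕ) :
    (insertRow R x).1.Pairwise (· ≤ ·) := by
  induction R with
  | nil => simp [insertRow]
  | cons y t ih =>
    rw [List.pairwise_cons] at hR
    by_cases hxy : x < y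
    · simp only [insertRow_cons, if_pos hxy, List.pairwise_cons]
      exact ⟨fun a ha => hxy.le.trans (hR.1 a ha), hR.2⟩
    · simp only [insertRow_cons, if_neg hxy, List.pairwise_cons]
      refine ⟨fun a ha => ?_, ih hR.2⟩
      have := (insertRow_perm t x).subset (mem_append_left _ ha)
      rcases mem_cons.1 this with rfl | ha
      · omega
      · exact hR.1 a ha

theorem le_of_insertRow_insertRow {R : List ℕ} (hR : R.Pairwise (· ≤ ·))
    {x₁ x₂ z₁ z₂ : ℕ} (hx : x₁ ≤ x₂) (h₁ : (insertRow R x₁).2 = some z₁)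
    (h₂ : (insertRow (insertRow R x₁).1 x₂).2 = some z₂) : z₁ ≤ z₂ := by
  induction R with
  | nil => simp [insertRow] at h₁
  | cons y t ih =>
    rw [List.pairwise_cons] at hR
    by_cases hxy : x₁ < y
    · simp only [insertRow_cons, if_pos hxy, if_neg (not_lt.2 hx), Option.some.injEq] at h₁ h₂
      exact h₁ ▸ hR.1 _ (mem_of_insertRow_eq_some h₂)
    · simp only [insertRow_cons, if_neg hxy, if_neg (show ¬ x₂ < y by omega)] at h₁ h₂
      exact ih hR.2 h₁ h₂

theorem exists_insertRow_insertRow_eq_some (R : List ℕ) {x₁ x₂ : ℕ} (hx : x₂ < x₁) :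
    ∃ z₂ ≤ x₁, (insertRow (insertRow R x₁).1 x₂).2 = some z₂ := by
  induction R with
  | nil => exact ⟨x₁, le_rfl, by simp [insertRow, hx]⟩
  | cons y t ih =>
    by_cases hxy : x₁ < y
    · exact ⟨x₁, le_rfl, by simp [insertRow_cons, hxy, hx]⟩
    · by_cases hxy₂ : x₂ < y
      · exact ⟨y, by omega, by simp [insertRow_cons, hxy, hxy₂]⟩
      · simp [insertRow_cons, hxy, hxy₂, ih]

/-- Schensted insertion of `x` into `T`, also returning the row of the new cell. -/
def insertWithRow : List (List ℕ) → ℕ → List (List ℕ) × ℕ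
  | [], x => ([[x]], 0)
  | R :: T, x =>
    match (insertRow R x).2 with
    | none => ((insertRow R x).1 :: T, 0)
    | some z => ((insertRow R x).1 :: (insertWithRow T z).1, (insertWithRow T z).2 + 1)

theorem insertWithRow_cons_of_eq_none {R : List ℕ} {x : ℕ} (h : (insertRow R x).2 = none)
    (T : List (List ℕ)) : insertWithRow (R :: T) x = ((insertRow R x).1 :: T, 0) := by
  simp [insertWithRow, h]

theorem insertWithRow_cons_of_eq_some {R : List ℕ} {x z : ℕ} (h : (insertRow R x).2 = some z)
    (T : List (List ℕ)) :
    insertWithRow (R :: T) x =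
      ((insertRow R x).1 :: (insertWithRow T z).1, (insertWithRow T z).2 + 1) := by
  simp [insertWithRow, h]

theorem insertWithRow_fst (T : List (List ℕ)) (x : ℕ) :
    (insertWithRow T x).1 = insertTableau T x := by
  induction T generalizing x with
  | nil => rfl
  | cons R T ih =>
    rcases h : insertRow R x with ⟨R', _ | z⟩ <;>
      simp [insertWithRow, insertTableau, h, ih]

theorem newCellRow_insertTableau (T : List (List ℕ)) (x : ℕ) :
    newCellRow T (insertTableau T x) = (insertWithRow T x).2 := by
  rw [← insertWithRow_fst]
  induction T generalizing x with
  | nil => rfl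
  | cons R T ih =>
    rcases h : (insertRow R x).2 with _ | z
    · simp [insertWithRow_cons_of_eq_none h, newCellRow, insertRow_of_eq_none h]
    · simp [insertWithRow_cons_of_eq_some h, newCellRow, length_insertRow_of_eq_some h, ih]

theorem insertWithRow_snd_le (T : List (List ℕ)) (x : ℕ) :
    (insertWithRow T x).2 ≤ T.length := by
  induction T generalizing x with
  | nil => rfl
  | cons R T ih =>
    rcases h : (insertRow R x).2 with _ | z
    · simp [insertWithRow_cons_of_eq_none h]
    · simpa [insertWithRow_cons_of_eq_some h] using ih z

theorem length_insertWithRow (T : List (List ℕ)) (x : ℕ) :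
    (insertWithRow T x).1.length =
      if (insertWithRow T x).2 = T.length then T.length + 1 else T.length := by
  induction T generalizing x with
  | nil => rfl
  | cons R T ih =>
    rcases h : (insertRow R x).2 with _ | z
    · simp [insertWithRow_cons_of_eq_none h]
    · simp only [insertWithRow_cons_of_eq_some h, length_cons, ih z, Nat.add_right_cancel_iff]
      split_ifs <;> rfl

theorem insertWithRow_fst_flatten_perm (T : List (List ℕ)) (x : ℕ) :
    (insertWithRow T x).1.flatten ~ x :: T.flatten := by
  induction T generalizing x with
  | nil => simp [insertWithRow]
  | cons R T ih =>
    have hrow := insertRow_perm R x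
    rcases h : (insertRow R x).2 with _ | z
    · rw [h] at hrow
      simpa [insertWithRow_cons_of_eq_none h] using hrow.append_right T.flatten
    · rw [h] at hrow
      simp only [insertWithRow_cons_of_eq_some h, flatten_cons]
      calc (insertRow R x).1 ++ (insertWithRow T z).1.flatten
          ~ (insertRow R x).1 ++ z :: T.flatten := (ih z).append_left _
        _ = ((insertRow R x).1 ++ [z]) ++ T.flatten := by simp
        _ ~ x :: R ++ T.flatten := by simpa using hrow.append_right T.flatten

theorem pairwise_of_mem_insertWithRow {T : List (List ℕ)}
    (hT : ∀ R ∈ T, R.Pairwise (· ≤ ·)) (x : ℕ) :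
    ∀ R ∈ (insertWithRow T x).1, R.Pairwise (· ≤ ·) := by
  induction T generalizing x with
  | nil => simp [insertWithRow]
  | cons R₀ T ih =>
    have hR₀ := pairwise_insertRow (hT R₀ mem_cons_self) x
    rcases h : (insertRow R₀ x).2 with _ | z
    · simpa [insertWithRow_cons_of_eq_none h, hR₀] using fun R hR => hT R (mem_cons_of_mem _ hR)
    · simpa [insertWithRow_cons_of_eq_some h, hR₀] using
        ih (fun R hR => hT R (mem_cons_of_mem _ hR)) z

/-- One half of the row bumping lemma; `insertWithRow_snd_lt_of_lt` is the other. -/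
theorem insertWithRow_snd_le_of_le {T : List (List ℕ)} (hT : ∀ R ∈ T, R.Pairwise (· ≤ ·))
    {x₁ x₂ : ℕ} (hx : x₁ ≤ x₂) :
    (insertWithRow (insertWithRow T x₁).1 x₂).2 ≤ (insertWithRow T x₁).2 := by
  induction T generalizing x₁ x₂ with
  | nil =>
    have : (insertRow [x₁] x₂).2 = none := by simp [insertRow, not_lt.2 hx]
    simp [insertWithRow, insertWithRow_cons_of_eq_none this]
  | cons R T ih =>
    have hR := hT R mem_cons_self
    rcases h₁ : (insertRow R x₁).2 with _ | z₁
    · have h₂ : (insertRow (insertRow R x₁).1 x₂).2 = none := by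
        rw [insertRow_of_eq_none h₁, insertRow_eq_append_of_forall_le]
        simpa [hx, or_imp, forall_and] using
          fun y hy => (le_of_insertRow_eq_none h₁ y hy).trans hx
      simp [insertWithRow_cons_of_eq_none h₁, insertWithRow_cons_of_eq_none h₂]
    · rcases h₂ : (insertRow (insertRow R x₁).1 x₂).2 with _ | z₂
      · simp [insertWithRow_cons_of_eq_some h₁, insertWithRow_cons_of_eq_none h₂]
      · simpa [insertWithRow_cons_of_eq_some h₁, insertWithRow_cons_of_eq_some h₂] using
          ih (fun R hR => hT R (mem_cons_of_mem _ hR)) (le_of_insertRow_insertRow hR hx h₁ h₂)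

theorem insertWithRow_snd_lt_of_lt (T : List (List ℕ)) {x₁ x₂ : ℕ} (hx : x₂ < x₁) :
    (insertWithRow T x₁).2 < (insertWithRow (insertWithRow T x₁).1 x₂).2 := by
  induction T generalizing x₁ x₂ with
  | nil =>
    have : (insertRow [x₁] x₂).2 = some x₁ := by simp [insertRow, hx]
    simp [insertWithRow, insertWithRow_cons_of_eq_some this]
  | cons R T ih =>
    obtain ⟨z₂, hz₂, h₂⟩ := exists_insertRow_insertRow_eq_some R hx
    rcases h₁ : (insertRow R x₁).2 with _ | z₁
    · simp [insertWithRow_cons_of_eq_none h₁, insertWithRow_cons_of_eq_some h₂]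
    · have := lt_of_insertRow_eq_some h₁
      simpa [insertWithRow_cons_of_eq_some h₁, insertWithRow_cons_of_eq_some h₂] using
        ih (show z₂ < z₁ by omega)

@[simp]
theorem placeEntry_nil (i k : ℕ) : placeEntry [] i k = [[k]] := by
  cases i <;> rfl

theorem length_placeEntry {Q : List (List ℕ)} {i : ℕ} (hi : i ≤ Q.length) (k : ℕ) :
    (placeEntry Q i k).length = if i = Q.length then Q.length + 1 else Q.length := by
  induction Q generalizing i with
  | nil => simp_all
  | cons R T ih =>
    cases i with
    | zero => simp [placeEntry]
    | succ i =>
      simp only [placeEntry, length_cons, ih (Nat.le_of_succ_le_succ hi), Nat.add_right_cancel_iff]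
      split_ifs <;> rfl

theorem placeEntry_flatten_perm (Q : List (List ℕ)) (i k : ℕ) :
    (placeEntry Q i k).flatten ~ k :: Q.flatten := by
  induction Q generalizing i with
  | nil => simp
  | cons R T ih =>
    cases i with
    | zero => simp [placeEntry]
    | succ i => simpa [placeEntry] using ((ih i).append_left R).trans perm_middle

theorem insertWithRow_of_forall_le {T : List (List ℕ)} {m : ℕ}
    (hT : ∀ y ∈ T.flatten, y ≤ m) : insertWithRow T m = (placeEntry T 0 m, 0) := by
  cases T with
  | nil => rfl
  | cons R T =>
    have hR : ∀ y ∈ R, y ≤ m := fun y hy => hT y (mem_append_left _ hy)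
    have h := insertRow_eq_append_of_forall_le hR
    rw [insertWithRow_cons_of_eq_none (by rw [h]), h]
    rfl

theorem insertWithRow_placeEntry {T : List (List ℕ)} {x m : ℕ} (hx : x < m)
    (hT : ∀ y ∈ T.flatten, y < m) {r : ℕ} (hr : r ≤ T.length) :
    insertWithRow (placeEntry T r m) x =
      if (insertWithRow T x).2 = r then (placeEntry (insertWithRow T x).1 (r + 1) m, r + 1)
      else (placeEntry (insertWithRow T x).1 r m, (insertWithRow T x).2) := by
  induction T generalizing x r with
  | nil =>
    obtain rfl : r = 0 := by simpa using hr
    have : (insertRow [m] x).2 = some m := by simp [insertRow, hx]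
    simp [insertWithRow_cons_of_eq_some this, insertWithRow, placeEntry, insertRow, hx]
  | cons R T ih =>
    simp only [flatten_cons, mem_append] at hT
    rcases h : (insertRow R x).2 with _ | z
    · have hR := le_of_insertRow_eq_none h
      cases r with
      | zero =>
        have h' : insertRow (R ++ [m]) x = (R ++ [x], some m) := by
          simp [insertRow_append_of_forall_not_lt (fun y hy => not_lt.2 (hR y hy)), insertRow, hx]
        rw [placeEntry, insertWithRow_cons_of_eq_some (by rw [h']), h',
          insertWithRow_cons_of_eq_none h, insertRow_of_eq_none h]
        simp [placeEntry, insertWithRow_of_forall_le (fun y hy => (hT y (.inr hy)).le)]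
      | succ r => simp [placeEntry, insertWithRow_cons_of_eq_none h]
    · have hz : z < m := hT z (.inl (mem_of_insertRow_eq_some h))
      cases r with
      | zero =>
        have h' := insertRow_append_of_some h [m]
        rw [placeEntry, insertWithRow_cons_of_eq_some (z := z) (by rw [h']), h']
        simp [insertWithRow_cons_of_eq_some h, placeEntry]
      | succ r =>
        rw [placeEntry, insertWithRow_cons_of_eq_some h, insertWithRow_cons_of_eq_some h,
          ih hz (fun y hy => hT y (.inr hy)) (Nat.le_of_succ_le_succ hr)]
        split_ifs <;> simp_all [placeEntry]

theorem rowOfEntry_placeEntry_of_ne {Q : List (List ℕ)} {t k : ℕ} (hk : k ≠ t)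
    (ht : t ∈ Q.flatten) (i : ℕ) : rowOfEntry (placeEntry Q i k) t = rowOfEntry Q t := by
  induction Q generalizing i with
  | nil => simp at ht
  | cons R T ih =>
    cases i with
    | zero => simp [rowOfEntry, placeEntry, findIdx_cons, hk.symm]
    | succ i =>
      by_cases htR : t ∈ R
      · simp [rowOfEntry, placeEntry, findIdx_cons, htR]
      · have := ih (by simpa [htR] using ht) i
        simp_all [rowOfEntry, placeEntry, findIdx_cons]

theorem rowOfEntry_placeEntry_self {Q : List (List ℕ)} {k i : ℕ} (hk : k ∉ Q.flatten)
    (hi : i ≤ Q.length) : rowOfEntry (placeEntry Q i k) k = i := by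
  induction Q generalizing i with
  | nil => simp_all [rowOfEntry]
  | cons R T ih =>
    simp only [flatten_cons, mem_append, not_or] at hk
    cases i with
    | zero => simp [rowOfEntry, placeEntry, findIdx_cons]
    | succ i =>
      have := ih hk.2 (Nat.le_of_succ_le_succ hi)
      simp_all [rowOfEntry, placeEntry, findIdx_cons]

def rsStep (S : List (List ℕ) × List (List ℕ)) (c : ℕ × ℕ) :
    List (List ℕ) × List (List ℕ) :=
  ((insertWithRow S.1 c.2).1, placeEntry S.2 (insertWithRow S.1 c.2).2 c.1)

def rsStepDual (S : List (List ℕ) × List (List ℕ)) (c : ℕ × ℕ) :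
    List (List ℕ) × List (List ℕ) :=
  (rsStep S.swap c.swap).swap

theorem robinsonSchensted_eq_foldl (l : List (ℕ × ℕ)) :
    robinsonSchensted l = l.foldl rsStep ([], []) := by
  unfold robinsonSchensted
  congr
  funext S c
  simp [rsStep, insertWithRow_fst, newCellRow_insertTableau]

section RSStep

variable {S : List (List ℕ) × List (List ℕ)}

theorem rsStep_length (h : S.1.length = S.2.length) (c : ℕ × ℕ) :
    (rsStep S c).1.length = (rsStep S c).2.length := by
  have := insertWithRow_snd_le S.1 c.2
  rw [rsStep, length_insertWithRow, length_placeEntry (h ▸ this), h]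

theorem mem_rsStep_fst_flatten {c : ℕ × ℕ} {a : ℕ} :
    a ∈ (rsStep S c).1.flatten ↔ a = c.2 ∨ a ∈ S.1.flatten := by
  simp [rsStep, (insertWithRow_fst_flatten_perm _ _).mem_iff]

theorem mem_rsStep_snd_flatten {c : ℕ × ℕ} {a : ℕ} :
    a ∈ (rsStep S c).2.flatten ↔ a = c.1 ∨ a ∈ S.2.flatten := by
  simp [rsStep, (placeEntry_flatten_perm _ _ _).mem_iff]

theorem rowOfEntry_rsStep_self (h : S.1.length = S.2.length) {t : ℕ} (ht : t ∉ S.2.flatten)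
    (y : ℕ) : rowOfEntry (rsStep S (t, y)).2 t = (insertWithRow S.1 y).2 :=
  rowOfEntry_placeEntry_self ht (h ▸ insertWithRow_snd_le S.1 y)

theorem rsStep_eq_rsStepDual_of_forall_le {ts m : ℕ} (hP : ∀ a ∈ S.1.flatten, a ≤ m)
    (hQ : ∀ a ∈ S.2.flatten, a ≤ ts) : rsStep S (ts, m) = rsStepDual S (ts, m) := by
  simp [rsStep, rsStepDual, insertWithRow_of_forall_le hP, insertWithRow_of_forall_le hQ]

theorem rsStep_rsStepDual (h : S.1.length = S.2.length) {ts m t y : ℕ}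
    (hP : ∀ a ∈ S.1.flatten, a < m) (hQ : ∀ a ∈ S.2.flatten, a < t) (hy : y < m)
    (ht : ts < t) :
    rsStep (rsStepDual S (ts, m)) (t, y) = rsStepDual (rsStep S (t, y)) (ts, m) := by
  obtain ⟨P, Q⟩ := S
  simp only [rsStep, rsStepDual, Prod.swap]
  rw [insertWithRow_placeEntry hy hP (h ▸ insertWithRow_snd_le Q ts),
    insertWithRow_placeEntry ht hQ (h.symm ▸ insertWithRow_snd_le P y)]
  split_ifs <;> simp_all

theorem foldl_rsStep_length (L : List (ℕ × ℕ)) (h : S.1.length = S.2.length) :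
    (L.foldl rsStep S).1.length = (L.foldl rsStep S).2.length := by
  induction L generalizing S with
  | nil => exact h
  | cons c L ih => exact ih (rsStep_length h c)

theorem mem_foldl_rsStep_fst_flatten {L : List (ℕ × ℕ)} {a : ℕ} :
    a ∈ (L.foldl rsStep S).1.flatten ↔ a ∈ L.map Prod.snd ∨ a ∈ S.1.flatten := by
  induction L generalizing S with
  | nil => simp
  | cons c L ih =>
    rw [foldl_cons, ih, mem_rsStep_fst_flatten, List.map_cons, List.mem_cons]
    tauto

theorem mem_foldl_rsStep_snd_flatten {L : List (ℕ × ℕ)} {a : ℕ} :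
    a ∈ (L.foldl rsStep S).2.flatten ↔ a ∈ L.map Prod.fst ∨ a ∈ S.2.flatten := by
  induction L generalizing S with
  | nil => simp
  | cons c L ih =>
    rw [foldl_cons, ih, mem_rsStep_snd_flatten, List.map_cons, List.mem_cons]
    tauto

theorem pairwise_of_mem_foldl_rsStep_fst (L : List (ℕ × ℕ))
    (hS : ∀ R ∈ S.1, R.Pairwise (· ≤ ·)) :
    ∀ R ∈ (L.foldl rsStep S).1, R.Pairwise (· ≤ ·) := by
  induction L generalizing S with
  | nil => exact hS
  | cons c L ih => exact ih (pairwise_of_mem_insertWithRow hS c.2)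

theorem rowOfEntry_foldl_rsStep {L : List (ℕ × ℕ)} {t : ℕ} (ht : t ∈ S.2.flatten)
    (htL : t ∉ L.map Prod.fst) : rowOfEntry (L.foldl rsStep S).2 t = rowOfEntry S.2 t := by
  induction L generalizing S with
  | nil => rfl
  | cons c L ih =>
    simp only [List.map_cons, List.mem_cons, not_or] at htL
    rw [foldl_cons, ih (mem_rsStep_snd_flatten.2 (.inr ht)) htL.2, rsStep,
      rowOfEntry_placeEntry_of_ne (Ne.symm htL.1) ht]

theorem foldl_rsStep_rsStepDual {L : List (ℕ × ℕ)} (hL : L.Pairwise (·.1 < ·.1)) {ts m : ℕ}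
    (hLm : ∀ c ∈ L, ts < c.1 ∧ c.2 < m) (h : S.1.length = S.2.length)
    (hP : ∀ a ∈ S.1.flatten, a < m) (hQ : ∀ a ∈ S.2.flatten, ∀ c ∈ L, a < c.1) :
    L.foldl rsStep (rsStepDual S (ts, m)) = rsStepDual (L.foldl rsStep S) (ts, m) := by
  induction L generalizing S with
  | nil => rfl
  | cons c L ih =>
    rw [List.pairwise_cons] at hL
    obtain ⟨hts, hcm⟩ := hLm c mem_cons_self
    rw [foldl_cons, foldl_cons,
      rsStep_rsStepDual h hP (fun a ha => hQ a ha c mem_cons_self) hcm hts]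
    refine ih hL.2 (fun c' hc' => hLm c' (mem_cons_of_mem _ hc')) (rsStep_length h c) ?_ ?_
    · intro a ha
      rcases mem_rsStep_fst_flatten.1 ha with rfl | ha
      exacts [hcm, hP a ha]
    · intro a ha c' hc'
      rcases mem_rsStep_snd_flatten.1 ha with rfl | ha
      exacts [hL.1 c' hc', hQ a ha c' (mem_cons_of_mem _ hc')]

end RSStep

theorem foldl_rsStep_append_cons_of_forall_lt {L₁ L₂ : List (ℕ × ℕ)} {ts m : ℕ}
    (hL : (L₁ ++ (ts, m) :: L₂).Pairwise (·.1 < ·.1)) (hm : ∀ c ∈ L₁ ++ L₂, c.2 < m) :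
    (L₁ ++ (ts, m) :: L₂).foldl rsStep ([], []) =
      rsStepDual ((L₁ ++ L₂).foldl rsStep ([], [])) (ts, m) := by
  rw [List.pairwise_append, List.pairwise_cons] at hL
  obtain ⟨-, ⟨hts, hL₂⟩, hL₁⟩ := hL
  set S₁ := L₁.foldl rsStep ([], [])
  have hP : ∀ a ∈ S₁.1.flatten, a < m := fun a ha => by
    obtain ⟨t, ht⟩ : ∃ t, (t, a) ∈ L₁ := by simpa using mem_foldl_rsStep_fst_flatten.1 ha
    exact hm _ (mem_append_left _ ht)
  have hQ : ∀ a ∈ S₁.2.flatten, ∀ c ∈ (ts, m) :: L₂, a < c.1 := fun a ha => by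
    obtain ⟨y, hy⟩ : ∃ y, (a, y) ∈ L₁ := by simpa using mem_foldl_rsStep_snd_flatten.1 ha
    exact hL₁ _ hy
  rw [foldl_append, foldl_cons, foldl_append,
    rsStep_eq_rsStepDual_of_forall_le (fun a ha => (hP a ha).le)
      (fun a ha => (hQ a ha _ mem_cons_self).le),
    foldl_rsStep_rsStepDual hL₂ (fun c hc => ⟨hts c hc, hm c (mem_append_right _ hc)⟩)
      (foldl_rsStep_length L₁ rfl) hP (fun a ha c hc => hQ a ha c (mem_cons_of_mem _ hc))]

theorem foldl_rsStep_eq_swap {L M : List (ℕ × ℕ)} (hL : L.Pairwise (·.1 < ·.1))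
    (hM : M.Pairwise (·.1 < ·.1)) (hLM : M ~ L.map Prod.swap) :
    M.foldl rsStep ([], []) = (L.foldl rsStep ([], [])).swap := by
  induction M using List.reverseRecOn generalizing L with
  | nil => simp [List.eq_nil_of_map_eq_nil (hLM.symm.eq_nil)]
  | append_singleton M c ih =>
    -- `c` has the largest first letter in `M`, hence the largest second letter in `L`
    obtain ⟨m, ts⟩ := c
    obtain ⟨L₁, L₂, rfl⟩ : ∃ L₁ L₂, L = L₁ ++ (ts, m) :: L₂ := by
      apply append_of_mem
      simpa using hLM.subset (mem_append_right M (List.mem_singleton_self _))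
    have hM' : M ~ (L₁ ++ L₂).map Prod.swap := by
      refine (perm_cons (m, ts)).1 ((perm_append_singleton _ _).symm.trans ?_)
      simpa using hLM.trans (by simp)
    rw [List.pairwise_append] at hM
    have hm : ∀ c ∈ L₁ ++ L₂, c.2 < m := fun c hc =>
      hM.2.2 c.swap (hM'.symm.subset (mem_map_of_mem hc)) (m, ts) (List.mem_singleton_self _)
    rw [foldl_rsStep_append_cons_of_forall_lt hL hm, foldl_append,
      ih (hL.sublist ((sublist_cons_self _ _).append_left _)) hM.1 hM']
    rfl

theorem rowOfEntry_lt_rowOfEntry_iff {l₁ l₂ : List (ℕ × ℕ)} {t₁ y₁ t₂ y₂ : ℕ}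
    (hL : (l₁ ++ (t₁, y₁) :: (t₂, y₂) :: l₂).Pairwise (·.1 < ·.1)) :
    rowOfEntry ((l₁ ++ (t₁, y₁) :: (t₂, y₂) :: l₂).foldl rsStep ([], [])).2 t₁ <
        rowOfEntry ((l₁ ++ (t₁, y₁) :: (t₂, y₂) :: l₂).foldl rsStep ([], [])).2 t₂ ↔
      y₂ < y₁ := by
  rw [List.pairwise_append, List.pairwise_cons, List.pairwise_cons] at hL
  obtain ⟨-, ⟨ht₁, ⟨ht₂, -⟩⟩, hl₁⟩ := hL
  set S₀ := l₁.foldl rsStep ([], [])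
  have hlen₀ : S₀.1.length = S₀.2.length := foldl_rsStep_length l₁ rfl
  have hS₀ : ∀ t ∈ S₀.2.flatten, t < t₁ ∧ t < t₂ := fun t ht => by
    obtain ⟨y, hy⟩ : ∃ y, (t, y) ∈ l₁ := by simpa using mem_foldl_rsStep_snd_flatten.1 ht
    exact ⟨hl₁ _ hy _ mem_cons_self, hl₁ _ hy _ (mem_cons_of_mem _ mem_cons_self)⟩
  have not_mem_fst :
      ∀ {t : ℕ} {l : List (ℕ × ℕ)}, (∀ c ∈ l, t < c.1) → t ∉ l.map Prod.fst := fun ht h => by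
    obtain ⟨c, hc, rfl⟩ := List.mem_map.1 h
    exact lt_irrefl _ (ht c hc)
  set S₁ := rsStep S₀ (t₁, y₁)
  have hrow₁ :
      rowOfEntry (((t₂, y₂) :: l₂).foldl rsStep S₁).2 t₁ = (insertWithRow S₀.1 y₁).2 := by
    rw [rowOfEntry_foldl_rsStep (mem_rsStep_snd_flatten.2 (.inl rfl)) (not_mem_fst ht₁),
      rowOfEntry_rsStep_self hlen₀ fun h => (hS₀ _ h).1.false]
  have ht₂S₁ : t₂ ∉ S₁.2.flatten := by
    rw [mem_rsStep_snd_flatten, not_or]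
    exact ⟨(ht₁ _ mem_cons_self).ne', fun h => (hS₀ _ h).2.false⟩
  have hrow₂ : rowOfEntry (l₂.foldl rsStep (rsStep S₁ (t₂, y₂))).2 t₂ =
      (insertWithRow (insertWithRow S₀.1 y₁).1 y₂).2 := by
    rw [rowOfEntry_foldl_rsStep (mem_rsStep_snd_flatten.2 (.inl rfl)) (not_mem_fst ht₂),
      rowOfEntry_rsStep_self (rsStep_length hlen₀ _) ht₂S₁]
    rfl
  rw [foldl_append, foldl_cons, hrow₁, foldl_cons, hrow₂]
  constructor
  · intro h
    by_contra hy
    exact (insertWithRow_snd_le_of_le (pairwise_of_mem_foldl_rsStep_fst l₁ (by simp))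
      (not_lt.1 hy)).not_gt h
  · exact fun h => insertWithRow_snd_lt_of_lt _ h

section SignedPerm

variable {n : ℕ} (w : Equiv.Perm (Fin n × Bool))

theorem oneLine_of_lt {p : ℕ} (h : p < n) :
    oneLine w p = (((w (⟨p, h⟩, false)).1 : ℕ), (w (⟨p, h⟩, false)).2) :=
  dif_pos h

theorem oneLine_fst_lt {p : ℕ} (h : p < n) : (oneLine w p).1 < n := by
  simp [oneLine_of_lt w h]

theorem mem_twoLine {c : Bool} {a b : ℕ} :
    (a, b) ∈ twoLine w c ↔
      ∃ p v : Fin n, a = p + 1 ∧ b = v + 1 ∧ w (p, false) = (v, c) := by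
  simp only [twoLine, List.mem_map, List.mem_filter, List.mem_range, decide_eq_true_eq,
    Prod.mk.injEq]
  constructor
  · rintro ⟨p, ⟨hp, rfl⟩, rfl, rfl⟩
    exact ⟨⟨p, hp⟩, (w (⟨p, hp⟩, false)).1, rfl, by simp [oneLine_of_lt w hp]⟩
  · rintro ⟨p, v, rfl, rfl, h⟩
    have hp : oneLine w p = ((v : ℕ), c) := by simp [oneLine_of_lt w p.2, h]
    exact ⟨p, ⟨p.2, by rw [hp]⟩, rfl, by rw [hp]⟩

theorem succ_mem_twoLine_map_fst {c : Bool} {q : ℕ} :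
    q + 1 ∈ (twoLine w c).map Prod.fst ↔ q < n ∧ (oneLine w q).2 = c := by
  simp [twoLine]

theorem pairwise_twoLine (c : Bool) : (twoLine w c).Pairwise (·.1 < ·.1) := by
  refine List.pairwise_map.2 (List.Pairwise.filter _ ?_)
  exact List.pairwise_lt_range.imp (by omega)

theorem twoLine_eq_append {p : ℕ} (h : p + 1 < n) {c : Bool} (hp : (oneLine w p).2 = c)
    (hp₁ : (oneLine w (p + 1)).2 = c) :
    ∃ l₁ l₂, twoLine w c =
      l₁ ++ (p + 1, (oneLine w p).1 + 1) :: (p + 2, (oneLine w (p + 1)).1 + 1) :: l₂ := by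
  have hrange :
      List.range n = List.range p ++ p :: (p + 1) :: List.range' (p + 2) (n - (p + 2)) := by
    obtain ⟨k, rfl⟩ : ∃ k, n = p + 2 + k := ⟨n - (p + 2), by omega⟩
    rw [List.range_eq_range', List.range_eq_range', Nat.add_sub_cancel_left, add_assoc,
      ← List.range'_append_1 (s := 0)]
    simp [List.range'_succ, show 2 + k = k + 1 + 1 by omega, add_assoc]
  simp only [twoLine, hrange, List.filter_append, List.filter_cons, hp, hp₁, List.map_append,
    List.map_cons, decide_true, if_true]
  exact ⟨_, _, rfl⟩

theorem any_contains_QB_snd {q : ℕ} (hq : q < n) :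
    ((QB w).2.any fun r => r.contains (q + 1)) = (oneLine w q).2 := by
  rw [Bool.eq_iff_iff]
  calc ((QB w).2.any fun r => r.contains (q + 1)) = true ↔ q + 1 ∈ (QB w).2.flatten := by
        simp [List.mem_flatten]
    _ ↔ q + 1 ∈ (twoLine w true).map Prod.fst := by
        simp only [QB, robinsonSchensted_eq_foldl, mem_foldl_rsStep_snd_flatten]
        simp
    _ ↔ (oneLine w q).2 = true := by simp [succ_mem_twoLine_map_fst, hq]

theorem rowOfEntry_lt_rowOfEntry_iff_of_twoLine {p : ℕ} (h : p + 1 < n) {c : Bool}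
    (hp : (oneLine w p).2 = c) (hp₁ : (oneLine w (p + 1)).2 = c) :
    rowOfEntry (robinsonSchensted (twoLine w c)).2 (p + 1) <
        rowOfEntry (robinsonSchensted (twoLine w c)).2 (p + 2) ↔
      (oneLine w (p + 1)).1 < (oneLine w p).1 := by
  obtain ⟨l₁, l₂, hl⟩ := twoLine_eq_append w h hp hp₁
  have hL := pairwise_twoLine w c
  rw [hl] at hL
  rw [robinsonSchensted_eq_foldl, hl, rowOfEntry_lt_rowOfEntry_iff hL]
  omega

end SignedPerm

theorem rOrd_lt_rOrd_or_iff {n : ℕ} {a b : ℕ × Bool} (hb : b.1 < n) :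
    (rOrd n b < rOrd n a ∨ (a.2 = true ∧ b.2 = false)) ↔
      (a.2 = b.2 ∧ b.1 < a.1) ∨ a.2 ≠ b.2 := by
  obtain ⟨a, _ | _⟩ := a <;> obtain ⟨b, _ | _⟩ := b <;> simp [rOrd] at hb ⊢; omega

theorem sDesPerm_eq_sDesBitab {n : ℕ} (w : Equiv.Perm (Fin n × Bool)) :
    sDesPerm w = sDesBitab (QB w).1 (QB w).2 n := by
  funext p
  simp only [sDesPerm, sDesBitab]
  have h₁ : p < n → ((QB w).2.any fun r => r.contains (p + 1)) = (oneLine w p).2 :=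
    any_contains_QB_snd w
  have h₂ : p + 1 < n → ((QB w).2.any fun r => r.contains (p + 2)) = (oneLine w (p + 1)).2 :=
    any_contains_QB_snd w
  by_cases hpn : p + 1 = n
  · simp only [if_pos hpn, h₁ (by omega)]
  by_cases hlt : p + 1 < n
  · simp only [if_neg hpn, h₁ (by omega), h₂ hlt]
    refine if_congr ?_ rfl rfl
    rw [rOrd_lt_rOrd_or_iff (oneLine_fst_lt w hlt)]
    cases hb₁ : (oneLine w p).2 <;> cases hb₂ : (oneLine w (p + 1)).2
    · simp [hlt, rowOfEntry_lt_rowOfEntry_iff_of_twoLine w hlt hb₁ hb₂, QB]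
    · simp
    · simp
    · simp [hlt, rowOfEntry_lt_rowOfEntry_iff_of_twoLine w hlt hb₁ hb₂, QB]
  · simp [hpn, hlt]

theorem apply_false_eq_iff {n : ℕ} {w : Equiv.Perm (Fin n × Bool)} (hw : IsSignedPerm w)
    (p v : Fin n) (c : Bool) : w (p, false) = (v, c) ↔ w (p, c) = (v, false) := by
  cases c
  · rfl
  · constructor <;> intro h
    · simpa [h] using hw (p, false)
    · simpa [h] using hw (p, true)

theorem twoLine_symm_perm {n : ℕ} {w : Equiv.Perm (Fin n × Bool)} (hw : IsSignedPerm w)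
    (c : Bool) : twoLine w.symm c ~ (twoLine w c).map Prod.swap := by
  have nodup : ∀ w : Equiv.Perm (Fin n × Bool), (twoLine w c).Nodup := fun w =>
    (pairwise_twoLine w c).imp fun h e => (e ▸ h).false
  refine (perm_ext_iff_of_nodup (nodup _) ((nodup w).map Prod.swap_injective)).2
    fun ⟨a, b⟩ => ?_
  simp only [List.mem_map, Prod.exists, Prod.swap_prod_mk, Prod.mk.injEq, mem_twoLine,
    Equiv.symm_apply_eq]
  constructor
  · rintro ⟨p, v, rfl, rfl, h⟩
    exact ⟨_, _, ⟨v, p, rfl, rfl, (apply_false_eq_iff hw v p c).2 h.symm⟩, rfl, rfl⟩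
  · rintro ⟨_, _, ⟨p, v, rfl, rfl, h⟩, rfl, rfl⟩
    exact ⟨v, p, rfl, rfl, ((apply_false_eq_iff hw p v c).1 h).symm⟩

theorem PB_symm {n : ℕ} {w : Equiv.Perm (Fin n × Bool)} (hw : IsSignedPerm w) :
    PB w.symm = QB w := by
  have h (c : Bool) :
      (robinsonSchensted (twoLine w.symm c)).1 = (robinsonSchensted (twoLine w c)).2 := by
    rw [robinsonSchensted_eq_foldl, robinsonSchensted_eq_foldl, foldl_rsStep_eq_swap
      (pairwise_twoLine w c) (pairwise_twoLine w.symm c) (twoLine_symm_perm hw c)]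
    rfl
  simp [PB, QB, h]

end TypeBRobinsonSchensted

theorem sDes_QB_and_PB_inv_general (n : ℕ) (w : Equiv.Perm (Fin n × Bool))
    (hw : IsSignedPerm w) :
    sDesPerm w = sDesBitab (QB w).1 (QB w).2 n ∧ PB w.symm = QB w :=
  ⟨TypeBRobinsonSchensted.sDesPerm_eq_sDesBitab w, TypeBRobinsonSchensted.PB_symm hw⟩

/-- For every signed permutation `w ∈ B_n`: `sDes(w) = sDes(Q^B(w))`, and
`P^B(w⁻¹) = Q^B(w)`. -/
theorem sDes_QB_and_PB_inv (n : ℕ) (hn : 0 < n) (w : Equiv.Perm (Fin n × Bool))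
    (hw : IsSignedPerm w) :
    sDesPerm w = sDesBitab (QB w).1 (QB w).2 n ∧ PB w.symm = QB w :=
  sDes_QB_and_PB_inv_general n w hw
end

section
/- Let A_n be the 2·3^{n−1} × 2·3^{n−1} matrix whose rows are indexed by signed compositions γ of n, columns by signed sets σ ∈ Σ^B(n), with entry wt_γ(σ). Then |det(A_n)| = Π_{γ} m_γ, where for a signed composition γ with k parts of absolute sizes γ₁,...,γ_k, m_γ = 2^{k/2}·Π_i γ_i. In particular, A_n is invertible. -/
open Finset

/-- The first sign (`true` = barred = `−`) appearing in a list of optional signs. -/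
def firstSign (l : List (Option Bool)) : Bool :=
  (l.filterMap id).headI

/-- Whether the `some` entries of a list form a prefix (no `some` after a `none`). -/
def somesArePrefix (l : List (Option Bool)) : Bool :=
  (l.dropWhile fun o => o.isSome).all fun o => o.isNone

/-- The weight `wt_γ(σ)` of a signed set `σ` (encoded as a word `l` over
`{0,1,*} = Option Bool`) with respect to a signed composition `γ`:
`wt_γ(σ) = 0` unless `S(σ)` is unimodal with respect to the underlying composition of
`γ` and the sign vector `ε̃` of `σ` is constant on each block of `γ`; otherwise
`wt_γ(σ) = (−1)^{|S(σ) \ S(γ)| + n_γ(σ)}`, where `n_γ(σ)` is the number of blocks on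
which both `γ` and `σ` assign the negative sign. -/
def wt : List (ℕ × Bool) → List (Option Bool) → ℤ
  | [], l => if l.isEmpty then 1 else 0
  | (a, b) :: t, l =>
      let blk := l.take a
      let inner := blk.take (a - 1)
      let sgn := firstSign l
      if somesArePrefix inner
          && ((List.range blk.length).all fun j => firstSign (l.drop j) == sgn) then
        (-1 : ℤ) ^ ((inner.filterMap id).length + (if b && sgn then 1 else 0))
          * wt t (l.drop a)
      else 0

/-- Decoding of a word over `{0,1,*}` (with last letter not `*`) into the signed
composition it encodes. -/
def compOfWord : List (Option Bool) → List (ℕ × Bool)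
  | [] => []
  | none :: t =>
      match compOfWord t with
      | [] => []
      | (a, b) :: r => (a + 1, b) :: r
  | some b :: t => (1, b) :: compOfWord t

/-- The set `Σ^B(n+1)` of signed sets, encoded as words of length `n+1` over `{0,1,*}`
whose last letter is not `*`. -/
def SignedSetWord (n : ℕ) : Type :=
  { w : Fin (n + 1) → Option Bool // w (Fin.last n) ≠ none }

noncomputable instance (n : ℕ) : Fintype (SignedSetWord n) := by
  unfold SignedSetWord; infer_instance

instance (n : ℕ) : DecidableEq (SignedSetWord n) := by
  unfold SignedSetWord; infer_instance

/-- The weight matrix `A_{n+1}`, with rows indexed by signed compositions of `n+1`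
(encoded as words) and columns by signed sets in `Σ^B(n+1)`, whose `(γ, σ)` entry is
`wt_γ(σ)`. -/
def weightMatrix (n : ℕ) : Matrix (SignedSetWord n) (SignedSetWord n) ℤ :=
  Matrix.of fun γ σ => wt (compOfWord (List.ofFn γ.1)) (List.ofFn σ.1)

/-- The length of the initial run of `*`-s in a word. -/
def starRun {n : ℕ} (w : SignedSetWord n) : ℕ :=
  ((List.ofFn w.1).takeWhile fun o => o.isNone).length

/-- The matrix `Â_{n+1}`, obtained from `A_{n+1}` by setting to zero all entries
`(γ, σ)` for which the initial `*`-run of the row word is longer than that of the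
column word. -/
def weightMatrixHat (n : ℕ) : Matrix (SignedSetWord n) (SignedSetWord n) ℤ :=
  Matrix.of fun γ σ => if starRun σ < starRun γ then 0 else weightMatrix n γ σ

/-- `A_{n+1}` as a real matrix. -/
noncomputable def weightMatrixR (n : ℕ) : Matrix (SignedSetWord n) (SignedSetWord n) ℝ :=
  Matrix.of fun γ σ => ((weightMatrix n γ σ : ℤ) : ℝ)

/-- `Â_{n+1}` as a real matrix. -/
noncomputable def weightMatrixHatR (n : ℕ) :
    Matrix (SignedSetWord n) (SignedSetWord n) ℝ :=
  Matrix.of fun γ σ => ((weightMatrixHat n γ σ : ℤ) : ℝ)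

/-- The list of (absolute) part sizes of the signed composition encoded by the word `γ`. -/
def partSizes {n : ℕ} (γ : SignedSetWord n) : List ℕ :=
  (compOfWord (List.ofFn γ.1)).map Prod.fst

/-!
Split the words of length `n + 2` according to their first letter: a sign `b` or
a star. Deform `A` into `B_c = A + c • Â`. On the rows and columns starting with a sign, `B_c`
is `(c + 1)` times the Kronecker product of `K = [[1, 1], [1, -1]]` with `A_{n+1}`; on those
starting with a star it is `(c + 1) • Â_{n+1}`, because prefixing a star lengthens the first
part of the composition and the initial star run by one. Subtracting from the column `*σ` the
column `εσ`, where `ε` is the leading sign of `σ`, clears the upper right block and turns the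
lower right one into `B_{c+1}`. Hence
`det B_c(n+2) = ((c + 1)² · (-2))^N · det(A_{n+1})² · det B_{c+1}(n+1)`,
where `N = |Σ^B(n+1)|`,
and the product of the `m_γ`, with the first part of `γ` shifted by `c`, obeys the same
recursion up to sign.
-/

def noneRun (l : List (Option Bool)) : ℕ := (l.takeWhile fun o => o.isNone).length

@[simp] lemma noneRun_none_cons (l : List (Option Bool)) : noneRun (none :: l) = noneRun l + 1 := by
  simp [noneRun]

@[simp] lemma noneRun_some_cons (s : Bool) (l : List (Option Bool)) :
    noneRun (some s :: l) = 0 := by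
  simp [noneRun]

lemma all_isNone_take_iff_le_noneRun {l : List (Option Bool)} {m : ℕ} (hm : m ≤ l.length) :
    ((l.take m).all fun o => o.isNone) ↔ m ≤ noneRun l := by
  induction l generalizing m with
  | nil => simp_all
  | cons x t ih =>
    cases m with
    | zero => simp
    | succ m =>
      cases x with
      | none => simp [ih (by simpa using hm : m ≤ t.length)]
      | some s => simp

lemma noneRun_lt_length_append_some (u : List (Option Bool)) (s : Bool) :
    noneRun (u ++ [some s]) < (u ++ [some s]).length := by
  induction u with
  | nil => simp
  | cons x t ih => cases x <;> simp_all

lemma compOfWord_append_some (u : List (Option Bool)) (s : Bool) :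
    ∃ b t, compOfWord (u ++ [some s]) = (noneRun (u ++ [some s]) + 1, b) :: t := by
  induction u with
  | nil => exact ⟨s, [], rfl⟩
  | cons x v ih =>
    cases x with
    | none =>
      obtain ⟨b, t, ht⟩ := ih
      exact ⟨b, t, by simp [compOfWord, ht]⟩
    | some b => exact ⟨b, compOfWord (v ++ [some s]), by simp [compOfWord]⟩

@[simp] lemma firstSign_some_cons (s : Bool) (l : List (Option Bool)) :
    firstSign (some s :: l) = s := by
  simp [firstSign]

@[simp] lemma firstSign_none_cons (l : List (Option Bool)) :
    firstSign (none :: l) = firstSign l := by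
  simp [firstSign]

lemma somesArePrefix_of_all_isNone {l : List (Option Bool)} (h : l.all fun o => o.isNone) :
    somesArePrefix l := by
  cases l with
  | nil => rfl
  | cons x t =>
    cases x with
    | none => simpa [somesArePrefix] using h
    | some s => simp at h

lemma wt_cons (a : ℕ) (b : Bool) (t : List (ℕ × Bool)) (l : List (Option Bool)) :
    wt ((a, b) :: t) l =
      if somesArePrefix (l.take (a - 1))
          && ((List.range (l.take a).length).all fun j => firstSign (l.drop j) == firstSign l) then
        (-1 : ℤ) ^ (((l.take (a - 1)).filterMap id).length + (if b && firstSign l then 1 else 0))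
          * wt t (l.drop a)
      else 0 := by
  rw [wt]
  simp [List.take_take, Nat.min_def]

lemma wt_one_cons (b : Bool) (t : List (ℕ × Bool)) (x : Option Bool) (l : List (Option Bool)) :
    wt ((1, b) :: t) (x :: l) = (if b && firstSign (x :: l) then -1 else 1) * wt t l := by
  rw [wt_cons]
  simp [somesArePrefix, apply_ite (fun k => (-1 : ℤ) ^ k)]

lemma all_range_succ_firstSign_drop {x : Option Bool} {l : List (Option Bool)} {s : Bool}
    (hx : firstSign (x :: l) = s) (m : ℕ) :
    ((List.range (m + 1)).all fun j => firstSign ((x :: l).drop j) == s)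
      = ((List.range m).all fun j => firstSign (l.drop j) == s) := by
  simp [List.range_succ_eq_map, hx, List.all_map, Function.comp_def]

/-- A sign inside a block must agree with the sign of the rest of the block, and then counts
once in `|S(σ) \ S(γ)|`. -/
lemma wt_add_two_some_cons (a : ℕ) (b : Bool) (t : List (ℕ × Bool)) (s : Bool)
    {l : List (Option Bool)} (hl : a + 1 ≤ l.length) :
    wt ((a + 2, b) :: t) (some s :: l)
      = if firstSign l = s then -wt ((a + 1, b) :: t) l else 0 := by
  have hlen : (l.take (a + 1)).length = a + 1 := by simpa using hl
  rw [wt_cons, wt_cons, Nat.add_sub_cancel, show a + 2 - 1 = a + 1 from rfl]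
  simp only [List.take_succ_cons, List.length_cons, hlen, firstSign_some_cons]
  by_cases hs : firstSign l = s
  · rw [if_pos hs, hs, all_range_succ_firstSign_drop (firstSign_some_cons s l)]
    simp only [somesArePrefix, List.dropWhile_cons, Option.isSome_some, if_true,
      List.filterMap_cons, id, List.length_cons, List.drop_succ_cons]
    split_ifs <;> ring
  · have hfalse : ((List.range (a + 2)).all
        fun j => firstSign ((some s :: l).drop j) == s) = false :=
      List.all_eq_false.mpr ⟨1, List.mem_range.mpr (by omega), by simp [hs]⟩
    simp [hfalse, hs]

/-- A star inside a block is allowed only while the block is still in its initial star run. -/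
lemma wt_add_two_none_cons (a : ℕ) (b : Bool) (t : List (ℕ × Bool))
    {l : List (Option Bool)} (hl : a + 1 ≤ l.length) :
    wt ((a + 2, b) :: t) (none :: l)
      = if a ≤ noneRun l then wt ((a + 1, b) :: t) l else 0 := by
  have hlen : (l.take (a + 1)).length = a + 1 := by simpa using hl
  rw [wt_cons, wt_cons, Nat.add_sub_cancel, show a + 2 - 1 = a + 1 from rfl]
  simp only [List.take_succ_cons, List.length_cons, hlen, firstSign_none_cons,
    all_range_succ_firstSign_drop (firstSign_none_cons l)]
  have hnone : somesArePrefix (none :: l.take a) = (l.take a).all fun o => o.isNone := by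
    simp [somesArePrefix]
  by_cases h : a ≤ noneRun l
  · have hall := (all_isNone_take_iff_le_noneRun (by omega : a ≤ l.length)).mpr h
    simp [hnone, h, hall, somesArePrefix_of_all_isNone hall]
  · have hall : ((l.take a).all fun o => o.isNone) = false := by
      simpa using mt (all_isNone_take_iff_le_noneRun (by omega : a ≤ l.length)).mp h
    simp [hnone, h, hall]

namespace SignedSetWord

variable {n : ℕ}

def cons (x : Option Bool) (v : SignedSetWord n) : SignedSetWord (n + 1) :=
  ⟨Fin.cons x v.1, by rw [← Fin.succ_last, Fin.cons_succ]; exact v.2⟩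

def tail (w : SignedSetWord (n + 1)) : SignedSetWord n :=
  ⟨Fin.tail w.1, by simpa [Fin.tail, Fin.succ_last] using w.2⟩

def ofBool (b : Bool) : SignedSetWord 0 := ⟨fun _ => some b, by simp⟩

def leadSign (w : SignedSetWord n) : Bool := firstSign (List.ofFn w.1)

@[simp] lemma ofFn_cons (x : Option Bool) (v : SignedSetWord n) :
    List.ofFn (cons x v).1 = x :: List.ofFn v.1 := by
  simp [cons, List.ofFn_succ]

@[simp] lemma ofFn_ofBool (b : Bool) : List.ofFn (ofBool b).1 = [some b] := rfl

lemma starRun_eq_noneRun (w : SignedSetWord n) : starRun w = noneRun (List.ofFn w.1) := rfl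

@[simp] lemma starRun_cons_none (v : SignedSetWord n) : starRun (cons none v) = starRun v + 1 := by
  rw [starRun_eq_noneRun, ofFn_cons, noneRun_none_cons, starRun_eq_noneRun]

@[simp] lemma starRun_cons_some (b : Bool) (v : SignedSetWord n) :
    starRun (cons (some b) v) = 0 := by
  rw [starRun_eq_noneRun, ofFn_cons, noneRun_some_cons]

@[simp] lemma starRun_ofBool (b : Bool) : starRun (ofBool b) = 0 := by
  rw [starRun_eq_noneRun, ofFn_ofBool, noneRun_some_cons]

lemma exists_ofFn_eq_append_some (w : SignedSetWord n) :
    ∃ u s, List.ofFn w.1 = u ++ [some s] := by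
  obtain ⟨s, hs⟩ := Option.ne_none_iff_exists'.mp w.2
  exact ⟨List.ofFn fun i => w.1 i.castSucc, s, by
    rw [List.ofFn_succ', hs, List.concat_eq_append]⟩

lemma starRun_lt (w : SignedSetWord n) : starRun w < n + 1 := by
  obtain ⟨u, s, h⟩ := exists_ofFn_eq_append_some w
  have := noneRun_lt_length_append_some u s
  rwa [← h, List.length_ofFn] at this

lemma compOfWord_ofFn (γ : SignedSetWord n) :
    ∃ b t, compOfWord (List.ofFn γ.1) = (starRun γ + 1, b) :: t := by
  obtain ⟨u, s, h⟩ := exists_ofFn_eq_append_some γ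
  rw [starRun_eq_noneRun, h]
  exact compOfWord_append_some u s

lemma cons_val_zero_tail (w : SignedSetWord (n + 1)) : cons (w.1 0) (tail w) = w :=
  Subtype.ext (Fin.cons_self_tail w.1)

def consEquiv (n : ℕ) :
    (Bool × SignedSetWord n) ⊕ SignedSetWord n ≃ SignedSetWord (n + 1) where
  toFun := Sum.elim (fun p => cons (some p.1) p.2) (cons none)
  invFun w :=
    match w.1 0 with
    | some b => .inl (b, tail w)
    | none => .inr (tail w)
  left_inv := by rintro (⟨b, v⟩ | v) <;> rfl
  right_inv w := by
    rcases h : w.1 0 with _ | b <;> simp only [h, Sum.elim_inl, Sum.elim_inr] <;>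
      rw [← h, cons_val_zero_tail]

@[simp] lemma consEquiv_inl (b : Bool) (v : SignedSetWord n) :
    consEquiv n (.inl (b, v)) = cons (some b) v := rfl

@[simp] lemma consEquiv_inr (v : SignedSetWord n) : consEquiv n (.inr v) = cons none v := rfl

def ofBoolEquiv : Bool ≃ SignedSetWord 0 where
  toFun := ofBool
  invFun w := (w.1 0).getD false
  left_inv b := rfl
  right_inv w := by
    obtain ⟨s, hs⟩ := Option.ne_none_iff_exists'.mp w.2
    refine Subtype.ext (funext fun i => ?_)
    rw [Fin.fin_one_eq_zero i]
    exact (congrArg (fun o => some (o.getD false)) hs).trans hs.symm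

@[simp] lemma ofBoolEquiv_apply (b : Bool) : ofBoolEquiv b = ofBool b := rfl

lemma weightMatrix_cons_some (b : Bool) (γ : SignedSetWord n) (x : Option Bool)
    (σ : SignedSetWord n) :
    weightMatrix (n + 1) (cons (some b) γ) (cons x σ)
      = (if b && firstSign (x :: List.ofFn σ.1) then -1 else 1) * weightMatrix n γ σ := by
  simp only [weightMatrix, Matrix.of_apply, ofFn_cons]
  exact wt_one_cons b _ x _

lemma weightMatrix_cons_none_cons_some (γ : SignedSetWord n) (s : Bool) (σ : SignedSetWord n) :
    weightMatrix (n + 1) (cons none γ) (cons (some s) σ)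
      = if leadSign σ = s then -weightMatrix n γ σ else 0 := by
  obtain ⟨b, t, ht⟩ := compOfWord_ofFn γ
  simp only [weightMatrix, Matrix.of_apply, ofFn_cons, compOfWord, ht]
  rw [wt_add_two_some_cons _ _ _ _ (by simpa using starRun_lt γ)]
  rfl

lemma weightMatrix_cons_none_cons_none (γ σ : SignedSetWord n) :
    weightMatrix (n + 1) (cons none γ) (cons none σ)
      = if starRun γ ≤ starRun σ then weightMatrix n γ σ else 0 := by
  obtain ⟨b, t, ht⟩ := compOfWord_ofFn γ
  simp only [weightMatrix, Matrix.of_apply, ofFn_cons, compOfWord, ht]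
  rw [wt_add_two_none_cons _ _ _ (by simpa using starRun_lt γ)]
  rfl

lemma weightMatrix_ofBool (b s : Bool) :
    weightMatrix 0 (ofBool b) (ofBool s) = if b && s then -1 else 1 := by
  simp only [weightMatrix, Matrix.of_apply, ofFn_ofBool]
  rw [show compOfWord [some b] = [(1, b)] from rfl, wt_one_cons]
  simp [wt]

lemma partSizes_cons_some (b : Bool) (γ : SignedSetWord n) :
    partSizes (cons (some b) γ) = 1 :: partSizes γ := by
  simp only [partSizes, ofFn_cons, compOfWord, List.map_cons]

lemma partSizes_cons_none (γ : SignedSetWord n) :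
    partSizes (cons none γ) = (partSizes γ).modifyHead (· + 1) := by
  obtain ⟨b, t, ht⟩ := compOfWord_ofFn γ
  simp only [partSizes, ofFn_cons, compOfWord, ht, List.map_cons, List.modifyHead_cons]

@[simp] lemma partSizes_ofBool (b : Bool) : partSizes (ofBool b) = [1] := rfl

end SignedSetWord

open Kronecker SignedSetWord

lemma Matrix.det_fromBlocks_mul_right {l m R : Type*} [Fintype l] [Fintype m]
    [DecidableEq l] [DecidableEq m] [CommRing R] (A : Matrix l l R) (E : Matrix l m R)
    (C : Matrix m l R) (D : Matrix m m R) :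
    (Matrix.fromBlocks A (A * E) C D).det = A.det * (D - C * E).det := by
  calc (Matrix.fromBlocks A (A * E) C D).det
        = (Matrix.fromBlocks A (A * E) C D * Matrix.fromBlocks 1 (-E) 0 1).det := by
        rw [Matrix.det_mul, Matrix.det_fromBlocks_zero₂₁, Matrix.det_one, Matrix.det_one,
          mul_one, mul_one]
    _ = (Matrix.fromBlocks A 0 C (D - C * E)).det := by
        rw [Matrix.fromBlocks_multiply]
        simp [sub_eq_neg_add]
    _ = A.det * (D - C * E).det := Matrix.det_fromBlocks_zero₁₂ _ _ _

def signMatrix : Matrix Bool Bool ℤ := Matrix.of fun b s => if b && s then -1 else 1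

lemma det_signMatrix : signMatrix.det = -2 := by
  rw [← Matrix.det_submatrix_equiv_self finTwoEquiv, Matrix.det_fin_two]
  simp [signMatrix, finTwoEquiv]

def leadSignEmbedding (n : ℕ) : Matrix (Bool × SignedSetWord n) (SignedSetWord n) ℤ :=
  Matrix.of fun p σ => if p = (leadSign σ, σ) then 1 else 0

lemma mul_leadSignEmbedding_apply {ι : Type*} [Fintype ι] {n : ℕ}
    (M : Matrix ι (Bool × SignedSetWord n) ℤ) (i : ι) (σ : SignedSetWord n) :
    (M * leadSignEmbedding n) i σ = M i (leadSign σ, σ) := by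
  simp [Matrix.mul_apply, leadSignEmbedding]

lemma mul_transpose_leadSignEmbedding_apply {ι : Type*} [Fintype ι] {n : ℕ}
    (M : Matrix ι (SignedSetWord n) ℤ) (i : ι) (p : Bool × SignedSetWord n) :
    (M * (leadSignEmbedding n).transpose) i p = if leadSign p.2 = p.1 then M i p.2 else 0 := by
  obtain ⟨s, σ⟩ := p
  rw [Matrix.mul_apply,
    Fintype.sum_eq_single σ fun τ hτ => by simp [leadSignEmbedding, Ne.symm hτ]]
  simp [leadSignEmbedding, eq_comm]

lemma transpose_leadSignEmbedding_mul_self (n : ℕ) :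
    (leadSignEmbedding n).transpose * leadSignEmbedding n = 1 := by
  ext σ τ
  rw [mul_leadSignEmbedding_apply]
  by_cases h : σ = τ
  · subst h
    simp [leadSignEmbedding]
  · simp [leadSignEmbedding, h, Ne.symm h]

def deformedWeightMatrix (c n : ℕ) : Matrix (SignedSetWord n) (SignedSetWord n) ℤ :=
  weightMatrix n + (c : ℤ) • weightMatrixHat n

@[simp] lemma deformedWeightMatrix_zero (n : ℕ) : deformedWeightMatrix 0 n = weightMatrix n := by
  simp [deformedWeightMatrix]

lemma weightMatrixHat_apply {n : ℕ} (γ σ : SignedSetWord n) :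
    weightMatrixHat n γ σ = if starRun γ ≤ starRun σ then weightMatrix n γ σ else 0 := by
  simp only [weightMatrixHat, Matrix.of_apply, ← not_lt, ite_not]

lemma deformedWeightMatrix_submatrix_consEquiv (c n : ℕ) :
    (deformedWeightMatrix c (n + 1)).submatrix (consEquiv n) (consEquiv n) =
      Matrix.fromBlocks (((c : ℤ) + 1) • (signMatrix ⊗ₖ weightMatrix n))
        (((c : ℤ) + 1) • (signMatrix ⊗ₖ weightMatrix n) * leadSignEmbedding n)
        (-(weightMatrix n * (leadSignEmbedding n).transpose))
        (((c : ℤ) + 1) • weightMatrixHat n) := by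
  ext (⟨b, γ⟩ | γ) (⟨s, σ⟩ | σ) <;>
    simp only [Matrix.submatrix_apply, consEquiv_inl, consEquiv_inr, deformedWeightMatrix,
      Matrix.add_apply, Matrix.smul_apply, smul_eq_mul, Matrix.fromBlocks_apply₁₁,
      Matrix.fromBlocks_apply₁₂, Matrix.fromBlocks_apply₂₁, Matrix.fromBlocks_apply₂₂,
      Matrix.neg_apply, mul_leadSignEmbedding_apply, mul_transpose_leadSignEmbedding_apply,
      Matrix.kroneckerMap_apply, signMatrix, Matrix.of_apply,
      weightMatrixHat_apply (cons _ γ), starRun_cons_some, starRun_cons_none, zero_le, if_true]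
  · rw [weightMatrix_cons_some, firstSign_some_cons]
    ring
  · rw [weightMatrix_cons_some, firstSign_none_cons, leadSign]
    ring
  · rw [if_neg (by omega), weightMatrix_cons_none_cons_some]
    split_ifs <;> ring
  · simp only [weightMatrix_cons_none_cons_none, weightMatrixHat_apply γ σ, add_le_add_iff_right]
    split_ifs <;> ring

lemma det_deformedWeightMatrix_succ (c n : ℕ) :
    (deformedWeightMatrix c (n + 1)).det
      = (((c : ℤ) + 1) ^ 2 * -2) ^ Fintype.card (SignedSetWord n) * (weightMatrix n).det ^ 2
        * (deformedWeightMatrix (c + 1) n).det := by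
  have hlower : ((c : ℤ) + 1) • weightMatrixHat n
      - -(weightMatrix n * (leadSignEmbedding n).transpose) * leadSignEmbedding n
      = deformedWeightMatrix (c + 1) n := by
    rw [Matrix.neg_mul, sub_neg_eq_add, Matrix.mul_assoc, transpose_leadSignEmbedding_mul_self,
      Matrix.mul_one, deformedWeightMatrix, Nat.cast_succ, add_comm]
  rw [← Matrix.det_submatrix_equiv_self (consEquiv n), deformedWeightMatrix_submatrix_consEquiv,
    Matrix.det_fromBlocks_mul_right, hlower, Matrix.det_smul, Matrix.det_kronecker, det_signMatrix]
  simp only [Fintype.card_prod, Fintype.card_bool, mul_pow, ← pow_mul]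
  ring

lemma det_deformedWeightMatrix_zero (c : ℕ) :
    (deformedWeightMatrix c 0).det = ((c : ℤ) + 1) ^ 2 * -2 := by
  have h : (deformedWeightMatrix c 0).submatrix ofBoolEquiv ofBoolEquiv
      = ((c : ℤ) + 1) • signMatrix := by
    ext b s
    simp only [Matrix.submatrix_apply, deformedWeightMatrix, Matrix.add_apply, Matrix.smul_apply,
      smul_eq_mul, weightMatrixHat_apply, ofBoolEquiv_apply, starRun_ofBool, le_refl,
      if_true, weightMatrix_ofBool, signMatrix, Matrix.of_apply]
    ring
  rw [← Matrix.det_submatrix_equiv_self ofBoolEquiv, h, Matrix.det_smul, det_signMatrix,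
    Fintype.card_bool]

/-- `m_γ` with the first part of `γ` enlarged by `c`. -/
noncomputable def deformedFactor (c : ℕ) {n : ℕ} (γ : SignedSetWord n) : ℝ :=
  Real.sqrt 2 ^ (partSizes γ).length * (((partSizes γ).modifyHead (· + c)).prod : ℝ)

lemma deformedFactor_zero {n : ℕ} (γ : SignedSetWord n) :
    deformedFactor 0 γ = Real.sqrt 2 ^ (partSizes γ).length * ((partSizes γ).prod : ℝ) := by
  rw [deformedFactor, show (· + 0) = @id ℕ from rfl, List.modifyHead_id, id]

lemma deformedFactor_cons_some (c : ℕ) {n : ℕ} (b : Bool) (γ : SignedSetWord n) :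
    deformedFactor c (cons (some b) γ) = Real.sqrt 2 * ((c : ℝ) + 1) * deformedFactor 0 γ := by
  simp only [deformedFactor, partSizes_cons_some, List.length_cons, List.modifyHead_cons,
    List.prod_cons]
  rw [← deformedFactor, deformedFactor_zero]
  push_cast
  ring

lemma deformedFactor_cons_none (c : ℕ) {n : ℕ} (γ : SignedSetWord n) :
    deformedFactor c (cons none γ) = deformedFactor (c + 1) γ := by
  simp only [deformedFactor, partSizes_cons_none, List.length_modifyHead,
    List.modifyHead_modifyHead, Function.comp_def, add_assoc, add_comm 1 c]

lemma prod_deformedFactor_succ (c n : ℕ) :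
    ∏ γ : SignedSetWord (n + 1), deformedFactor c γ
      = (2 * ((c : ℝ) + 1) ^ 2) ^ Fintype.card (SignedSetWord n)
        * (∏ γ : SignedSetWord n, deformedFactor 0 γ) ^ 2
        * ∏ γ : SignedSetWord n, deformedFactor (c + 1) γ := by
  rw [← (consEquiv n).prod_comp, Fintype.prod_sum_type, Fintype.prod_prod_type]
  simp only [consEquiv_inl, consEquiv_inr, deformedFactor_cons_some, deformedFactor_cons_none,
    Finset.prod_mul_distrib, Finset.prod_const, Finset.card_univ, Fintype.card_bool]
  rw [show 2 * ((c : ℝ) + 1) ^ 2 = (Real.sqrt 2 * ((c : ℝ) + 1)) ^ 2 by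
    rw [mul_pow, Real.sq_sqrt zero_le_two]]
  rw [pow_right_comm (Real.sqrt 2 * _) 2, mul_pow]
  ring

lemma prod_deformedFactor_zero (c : ℕ) :
    ∏ γ : SignedSetWord 0, deformedFactor c γ = 2 * ((c : ℝ) + 1) ^ 2 := by
  rw [← ofBoolEquiv.prod_comp, Fintype.prod_bool]
  simp only [ofBoolEquiv_apply, deformedFactor, partSizes_ofBool, List.length_singleton,
    List.modifyHead_cons, List.prod_singleton]
  push_cast
  linear_combination ((c : ℝ) + 1) ^ 2 * Real.sq_sqrt (zero_le_two (α := ℝ))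

theorem det_deformedWeightMatrix (c n : ℕ) :
    (deformedWeightMatrix c n).det ≠ 0
      ∧ |((deformedWeightMatrix c n).det : ℝ)|
        = ∏ γ : SignedSetWord n, deformedFactor c γ := by
  induction n generalizing c with
  | zero =>
    rw [det_deformedWeightMatrix_zero, prod_deformedFactor_zero]
    refine ⟨mul_ne_zero (by positivity) (by norm_num), ?_⟩
    push_cast
    rw [abs_mul, abs_of_pos (by positivity), abs_neg, abs_two]
    ring
  | succ n ih =>
    obtain ⟨hA, hAabs⟩ := ih 0
    obtain ⟨hB, hBabs⟩ := ih (c + 1)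
    rw [deformedWeightMatrix_zero] at hA hAabs
    rw [det_deformedWeightMatrix_succ, prod_deformedFactor_succ, ← hAabs, ← hBabs]
    refine ⟨mul_ne_zero (mul_ne_zero (pow_ne_zero _ (by positivity)) (pow_ne_zero _ hA)) hB, ?_⟩
    push_cast
    rw [abs_mul, abs_mul, abs_pow, abs_pow, abs_mul, abs_neg, abs_two, sq_abs,
      abs_of_pos (by positivity)]
    ring

/-- The weight matrix `A_n` (here `A_{n+1} = weightMatrix n`, for all `n ≥ 1`) is
invertible; in fact `|det(A_n)| = Π_γ m_γ`, the product over all signed compositions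
`γ` of `n` of `m_γ = 2^{k/2} · Π_i γ_i`, where `γ₁, ..., γ_k` are the part sizes
of `γ`. -/
theorem weightMatrix_det (n : ℕ) :
    (weightMatrix n).det ≠ 0 ∧
    |((weightMatrix n).det : ℝ)|
      = ∏ γ : SignedSetWord n,
          (Real.sqrt 2) ^ (partSizes γ).length * ((partSizes γ).prod : ℝ) := by
  simpa [deformedFactor_zero] using det_deformedWeightMatrix 0 n
end

section
/- For every n, k, and σ ∈ Σ^B(n), the number of signed permutations w ∈ B_n with sDes(w⁻¹) = σ and finv(w) = k equals the number of w ∈ B_n with sDes(w⁻¹) = σ and fmaj(w) = k. -/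
open Finset

/-- The major index of `w ∈ B_n`: the sum of the (1-based) descent positions of
`(w(1),...,w(n))` with respect to the order `<_r`. -/
def majB {n : ℕ} (w : Equiv.Perm (Fin n × Bool)) : ℕ :=
  ∑ p ∈ Finset.range (n - 1),
    if rOrd n (oneLine w (p + 1)) < rOrd n (oneLine w p) then p + 1 else 0

/-- The number of inversions of `(w(1),...,w(n))` with respect to the order `<_r`. -/
def invB {n : ℕ} (w : Equiv.Perm (Fin n × Bool)) : ℕ :=
  ((Finset.range n ×ˢ Finset.range n).filter
    fun pq => pq.1 < pq.2 ∧ rOrd n (oneLine w pq.2) < rOrd n (oneLine w pq.1)).card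

/-- The number of barred entries of `w`. -/
def barB {n : ℕ} (w : Equiv.Perm (Fin n × Bool)) : ℕ :=
  ((Finset.range n).filter fun p => (oneLine w p).2 = true).card

/-- The flag-major index `fmaj(w) = 2·maj(w) + bar(w)`. -/
def fmajB {n : ℕ} (w : Equiv.Perm (Fin n × Bool)) : ℕ := 2 * majB w + barB w

/-- The flag-inversion number `finv(w) = 2·inv(w) + bar(w)`. -/
def finvB {n : ℕ} (w : Equiv.Perm (Fin n × Bool)) : ℕ := 2 * invB w + barB w

/-!
Replace each letter of the one-line notation of `w ∈ B_n` by its rank in `<_r`. Then `inv` and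
`maj` of `w` are those of this word of distinct naturals, and `bar` counts its letters below `n`.
Foata's second fundamental transformation `φ` is a bijection on such words which only permutes
the letters and turns `maj` into `inv`. It also keeps the relative order of any two letters `a`
and `a + 1`: when a new letter `x` is appended, those of `a`, `a + 1` already present lie on one
side of `x`, and `γ_x` only moves letters across letters of the other side. The signs of `w⁻¹`
are read off the set of letters, and a signed descent of `w⁻¹` between two letters of equal sign
off the relative order of two consecutive ranks. So `φ`, transported to `B_n`, preserves
`sDes(w⁻¹)` and `bar` and sends `fmaj` to `finv`.
-/

theorem List.countP_eq_sum_getD (q : ℕ → Bool) (l : List ℕ) :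
    l.countP q = ∑ i ∈ Finset.range l.length, if q (l.getD i 0) then 1 else 0 := by
  induction l with
  | nil => rfl
  | cons a t ih =>
    rw [List.countP_cons, List.length_cons, Finset.sum_range_succ', ih]
    simp only [List.getD_cons_succ, List.getD_cons_zero]

theorem List.idxOf_lt_idxOf_iff_filter {α : Type*} [DecidableEq α] {q : α → Bool} {x y : α}
    (hx : q x) (hy : q y) (l : List α) :
    l.idxOf x < l.idxOf y ↔ (l.filter q).idxOf x < (l.filter q).idxOf y := by
  induction l with
  | nil => simp
  | cons a t ih =>
    by_cases hqa : q a <;> by_cases hax : a = x <;> by_cases hay : a = y <;>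
      simp_all

namespace Foata

variable {α : Type*}

/-- On a word whose last letter satisfies `p`: cut it after each letter satisfying `p` and move
the last letter of each block to the front of its block. -/
def cycleBlocks (p : α → Bool) : List α → List α
  | [] => []
  | a :: t =>
    if p a then a :: cycleBlocks p t
    else match cycleBlocks p t with
      | [] => [a]
      | c :: r => c :: a :: r

variable {p : α → Bool}

theorem cycleBlocks_perm : ∀ l : List α, (cycleBlocks p l).Perm l
  | [] => .nil
  | a :: t => by
    have ih := cycleBlocks_perm t
    by_cases ha : p a
    · simpa [cycleBlocks, ha] using ih
    · rcases h : cycleBlocks p t with _ | ⟨c, r⟩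
      · simp_all [cycleBlocks]
      · rw [h] at ih
        simpa [cycleBlocks, ha, h] using (List.Perm.swap a c r).trans (ih.cons a)

theorem cycleBlocks_eq_nil {l : List α} : cycleBlocks p l = [] ↔ l = [] :=
  ⟨fun h => List.Perm.nil_eq (h ▸ cycleBlocks_perm l) |>.symm, by rintro rfl; rfl⟩

theorem cycleBlocks_cons_of_pos {a : α} {t : List α} (ha : p a) :
    cycleBlocks p (a :: t) = a :: cycleBlocks p t := by
  simp [cycleBlocks, ha]

theorem forall_getLast?_of_cons {a : α} {t : List α} (h : ∀ y ∈ (a :: t).getLast?, p y) :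
    ∀ y ∈ t.getLast?, p y := by
  intro y hy
  apply h
  cases t with
  | nil => simp at hy
  | cons b t => simpa [List.getLast?_cons_cons] using hy

theorem head_cycleBlocks :
    ∀ l : List α, (∀ y ∈ l.getLast?, p y) → ∀ c ∈ (cycleBlocks p l).head?, p c
  | [] => by simp [cycleBlocks]
  | a :: t => fun hl c hc => by
    by_cases ha : p a
    · simp_all [cycleBlocks]
    · have ht : t ≠ [] := by rintro rfl; simp_all
      have ih := head_cycleBlocks t (forall_getLast?_of_cons hl)
      rcases h : cycleBlocks p t with _ | ⟨d, r⟩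
      · exact absurd (cycleBlocks_eq_nil.1 h) ht
      · simp_all [cycleBlocks]

theorem cycleBlocks_cons_of_neg {a : α} {t : List α} (hl : ∀ y ∈ (a :: t).getLast?, p y)
    (ha : p a = false) :
    ∃ c r, p c ∧ cycleBlocks p t = c :: r ∧ cycleBlocks p (a :: t) = c :: a :: r := by
  have ht : t ≠ [] := by rintro rfl; simp_all
  rcases h : cycleBlocks p t with _ | ⟨c, r⟩
  · exact absurd (cycleBlocks_eq_nil.1 h) ht
  · refine ⟨c, r, head_cycleBlocks t (forall_getLast?_of_cons hl) c (by simp [h]), rfl, ?_⟩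
    simp [cycleBlocks, ha, h]

theorem cycleBlocks_inj : ∀ {l l' : List α}, (∀ y ∈ l.getLast?, p y) →
    (∀ y ∈ l'.getLast?, p y) → cycleBlocks p l = cycleBlocks p l' → l = l'
  | [], _, _, _, h => (cycleBlocks_eq_nil.1 h.symm).symm
  | _, [], _, _, h => cycleBlocks_eq_nil.1 h
  | a :: t, a' :: t', hl, hl', h => by
    have ih := @cycleBlocks_inj t t' (forall_getLast?_of_cons hl) (forall_getLast?_of_cons hl')
    cases ha : p a <;> cases ha' : p a'
    · obtain ⟨c, r, -, ht, hat⟩ := cycleBlocks_cons_of_neg hl ha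
      obtain ⟨c', r', -, ht', hat'⟩ := cycleBlocks_cons_of_neg hl' ha'
      simp only [hat, hat', List.cons.injEq] at h
      rw [h.2.1, ih (by rw [ht, ht', h.1, h.2.2])]
    · obtain ⟨c, r, hc, ht, hat⟩ := cycleBlocks_cons_of_neg hl ha
      rw [hat, cycleBlocks_cons_of_pos ha', List.cons.injEq] at h
      have := head_cycleBlocks t' (forall_getLast?_of_cons hl') a (by simp [← h.2])
      simp_all
    · obtain ⟨c', r', hc', ht', hat'⟩ := cycleBlocks_cons_of_neg hl' ha'
      rw [hat', cycleBlocks_cons_of_pos ha, List.cons.injEq] at h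
      have := head_cycleBlocks t (forall_getLast?_of_cons hl) a' (by simp [h.2])
      simp_all
    · rw [cycleBlocks_cons_of_pos ha, cycleBlocks_cons_of_pos ha', List.cons.injEq] at h
      rw [h.1, ih h.2]

theorem filter_cycleBlocks {q : α → Bool} :
    ∀ l : List α, (∀ y ∈ l.getLast?, p y) →
      (∀ y ∈ l, ∀ z ∈ l, q y → q z → p y = p z) →
      (cycleBlocks p l).filter q = l.filter q
  | [], _, _ => rfl
  | a :: t, hl, hq => by
    have ih := filter_cycleBlocks t (forall_getLast?_of_cons hl)
      (fun y hy z hz => hq y (.tail a hy) z (.tail a hz))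
    by_cases ha : p a
    · simp [cycleBlocks, ha, List.filter_cons, ih]
    · obtain ⟨c, r, hc, ht, hat⟩ := cycleBlocks_cons_of_neg hl (by simpa using ha)
      have hcmem : c ∈ t := (cycleBlocks_perm t).subset (ht ▸ List.mem_cons_self)
      have hqac : ¬ (q a ∧ q c) := fun h => by
        simpa [ha, hc] using hq a List.mem_cons_self c (.tail a hcmem) h.1 h.2
      rw [hat, List.filter_cons (x := a) (xs := t), ← ih, ht]
      by_cases hqa : q a <;> by_cases hqc : q c <;> simp_all

def inv : List ℕ → ℕ
  | [] => 0
  | a :: t => t.countP (· < a) + inv t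

theorem inv_append_singleton (l : List ℕ) (x : ℕ) :
    inv (l ++ [x]) = inv l + l.countP (x < ·) := by
  induction l with
  | nil => rfl
  | cons a t ih =>
    simp only [List.cons_append, inv, List.countP_append, ih, List.countP_cons, List.countP_nil]
    omega

theorem inv_cons_cons_of_lt {a c : ℕ} (h : c < a) (r : List ℕ) :
    inv (c :: a :: r) + 1 = inv (a :: c :: r) := by
  have hc : (a :: r).countP (· < c) = r.countP (· < c) :=
    List.countP_cons_of_neg (by simpa using Nat.lt_asymm h)
  have ha : (c :: r).countP (· < a) = r.countP (· < a) + 1 :=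
    List.countP_cons_of_pos (by simpa using h)
  simp only [inv, hc, ha]
  omega

theorem inv_cons_cycleBlocks (p : ℕ → Bool) (a : ℕ) (t : List ℕ) :
    inv (a :: cycleBlocks p t) = t.countP (· < a) + inv (cycleBlocks p t) := by
  rw [inv, (cycleBlocks_perm t).countP_eq]

-- Each block `A c` becomes `c A`, where `c` is smaller than every letter of `A`.
theorem inv_cycleBlocks_add {p : ℕ → Bool} (hsep : ∀ a b, p a → p b = false → a < b) :
    ∀ l : List ℕ, (∀ y ∈ l.getLast?, p y) →
      inv (cycleBlocks p l) + l.countP (fun a => !p a) = inv l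
  | [], _ => rfl
  | a :: t, hl => by
    have ih := inv_cycleBlocks_add hsep t (forall_getLast?_of_cons hl)
    have hcons := inv_cons_cycleBlocks p a t
    show _ = t.countP (· < a) + inv t
    cases ha : p a
    · obtain ⟨c, r, hc, ht, hat⟩ := cycleBlocks_cons_of_neg hl ha
      have hswap := inv_cons_cons_of_lt (hsep c a hc ha) r
      rw [← ht, hcons] at hswap
      rw [hat, List.countP_cons_of_pos (by simp [ha])]
      omega
    · rw [cycleBlocks_cons_of_pos ha, hcons, List.countP_cons_of_neg (by simp [ha])]
      omega

theorem inv_cycleBlocks_eq_add {p : ℕ → Bool} (hsep : ∀ a b, p a → p b = false → b < a) :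
    ∀ l : List ℕ, (∀ y ∈ l.getLast?, p y) →
      inv (cycleBlocks p l) = inv l + l.countP (fun a => !p a)
  | [], _ => rfl
  | a :: t, hl => by
    have ih := inv_cycleBlocks_eq_add hsep t (forall_getLast?_of_cons hl)
    have hcons := inv_cons_cycleBlocks p a t
    show _ = t.countP (· < a) + inv t + _
    cases ha : p a
    · obtain ⟨c, r, hc, ht, hat⟩ := cycleBlocks_cons_of_neg hl ha
      have hswap := inv_cons_cons_of_lt (hsep c a hc ha) r
      rw [← ht, hcons] at hswap
      rw [hat, List.countP_cons_of_pos (by simp [ha])]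
      omega
    · rw [cycleBlocks_cons_of_pos ha, hcons, List.countP_cons_of_neg (by simp [ha])]
      omega

theorem inv_eq_card (l : List ℕ) :
    inv l = ((Finset.range l.length ×ˢ Finset.range l.length).filter
      fun ij => ij.1 < ij.2 ∧ l.getD ij.2 0 < l.getD ij.1 0).card := by
  rw [Finset.card_filter, Finset.sum_product]
  induction l with
  | nil => rfl
  | cons a t ih =>
    simp only [List.length_cons, Finset.sum_range_succ', inv, ih, List.countP_eq_sum_getD,
      List.getD_cons_succ, List.getD_cons_zero]
    simp [add_comm]

def maj (l : List ℕ) : ℕ :=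
  ∑ i ∈ Finset.range (l.length - 1), if l.getD (i + 1) 0 < l.getD i 0 then i + 1 else 0

theorem maj_append_singleton (l : List ℕ) (x : ℕ) :
    maj (l ++ [x]) = maj l + if x < l.getLastD 0 then l.length else 0 := by
  rcases List.eq_nil_or_concat l with rfl | ⟨v, y, rfl⟩
  · simp [maj]
  have hprefix : ∀ i < v.length + 1, (v ++ [y] ++ [x]).getD i 0 = (v ++ [y]).getD i 0 :=
    fun i hi => List.getD_append _ _ _ _ (by simpa using hi)
  have hx : (v ++ [y] ++ [x]).getD (v.length + 1) 0 = x := by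
    rw [List.getD_append_right _ _ _ _ (by simp)]; simp
  have hy : (v ++ [y]).getD v.length 0 = y := by
    rw [List.getD_append_right _ _ _ _ le_rfl]; simp
  simp only [maj, List.concat_eq_append, List.length_append, List.length_singleton,
    Nat.add_sub_cancel, Finset.sum_range_succ, List.getLastD_concat]
  rw [hx, hprefix _ (Nat.lt_succ_self _), hy]
  congr 1
  refine Finset.sum_congr rfl fun i hi => ?_
  have hi := Finset.mem_range.1 hi
  rw [hprefix _ (by omega), hprefix _ (by omega)]

/-- Foata's `γ_x`. -/
def gamma (x : ℕ) (u : List ℕ) : List ℕ :=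
  if u.getLastD 0 ≤ x then cycleBlocks (· ≤ x) u else cycleBlocks (x < ·) u

theorem gamma_perm (x : ℕ) (u : List ℕ) : (gamma x u).Perm u := by
  unfold gamma; split <;> exact cycleBlocks_perm u

theorem forall_getLast?_le {x : ℕ} {u : List ℕ} (h : u.getLastD 0 ≤ x) :
    ∀ y ∈ u.getLast?, decide (y ≤ x) := by
  intro y hy
  rw [List.getLastD_eq_getLast?, Option.mem_def.1 hy] at h
  simpa using h

theorem forall_getLast?_gt {x : ℕ} {u : List ℕ} (h : ¬ u.getLastD 0 ≤ x) :
    ∀ y ∈ u.getLast?, decide (x < y) := by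
  intro y hy
  rw [List.getLastD_eq_getLast?, Option.mem_def.1 hy] at h
  simpa using h

theorem inv_gamma_of_le {x : ℕ} {u : List ℕ} (h : u.getLastD 0 ≤ x) :
    inv (gamma x u) + u.countP (x < ·) = inv u := by
  have hsep : ∀ a b, decide (a ≤ x) → decide (b ≤ x) = false → a < b := by
    intro a b ha hb
    simp only [decide_eq_true_eq, decide_eq_false_iff_not] at ha hb
    omega
  have := inv_cycleBlocks_add hsep u (forall_getLast?_le h)
  rw [gamma, if_pos h]
  rwa [List.countP_congr (q := (x < ·)) (by simp)] at this

theorem inv_gamma_of_lt {x : ℕ} {u : List ℕ} (h : x < u.getLastD 0) :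
    inv (gamma x u) = inv u + u.countP (· ≤ x) := by
  have hsep : ∀ a b, decide (x < a) → decide (x < b) = false → b < a := by
    intro a b ha hb
    simp only [decide_eq_true_eq, decide_eq_false_iff_not] at ha hb
    omega
  have := inv_cycleBlocks_eq_add hsep u (forall_getLast?_gt (Nat.not_le.2 h))
  rw [gamma, if_neg (Nat.not_le.2 h)]
  rwa [List.countP_congr (q := (· ≤ x)) (by simp)] at this

theorem filter_gamma {x : ℕ} {u : List ℕ} {q : ℕ → Bool}
    (hq : ∀ y ∈ u, ∀ z ∈ u, q y → q z → (y ≤ x ↔ z ≤ x)) :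
    (gamma x u).filter q = u.filter q := by
  unfold gamma
  split
  · exact filter_cycleBlocks u (forall_getLast?_le ‹_›) fun y hy z hz hqy hqz => by
      simp [hq y hy z hz hqy hqz]
  · exact filter_cycleBlocks u (forall_getLast?_gt ‹_›) fun y hy z hz hqy hqz => by
      simpa [not_le] using (hq y hy z hz hqy hqz).not

theorem head_gamma (x : ℕ) (u : List ℕ) :
    ∀ c ∈ (gamma x u).head?, (c ≤ x ↔ u.getLastD 0 ≤ x) := by
  intro c hc
  unfold gamma at hc
  split at hc
  · exact iff_of_true (by simpa using head_cycleBlocks u (forall_getLast?_le ‹_›) c hc) ‹_›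
  · exact iff_of_false (by simpa using head_cycleBlocks u (forall_getLast?_gt ‹_›) c hc)
      ‹_›

theorem gamma_inj {x : ℕ} {u u' : List ℕ} (h : gamma x u = gamma x u') : u = u' := by
  by_cases hu : u = []
  · subst hu
    have h0 : gamma x u' = [] := by rw [← h]; simp [gamma, cycleBlocks]
    exact List.Perm.nil_eq (h0 ▸ gamma_perm x u')
  obtain ⟨c, hc⟩ : ∃ c, (gamma x u).head? = some c :=
    Option.ne_none_iff_exists'.1 fun h0 => hu <| List.Perm.nil_eq
      ((List.head?_eq_none_iff.1 h0) ▸ gamma_perm x u) |>.symm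
  have hside := (head_gamma x u c hc).symm.trans (head_gamma x u' c (h ▸ hc))
  unfold gamma at h
  by_cases hle : u.getLastD 0 ≤ x
  · rw [if_pos hle, if_pos (hside.1 hle)] at h
    exact cycleBlocks_inj (forall_getLast?_le hle) (forall_getLast?_le (hside.1 hle)) h
  · rw [if_neg hle, if_neg (hside.not.1 hle)] at h
    exact cycleBlocks_inj (forall_getLast?_gt hle) (forall_getLast?_gt (hside.not.1 hle)) h

/-- Foata's second fundamental transformation, `φ(u x) = γ_x(φ u) x`. -/
def phi (l : List ℕ) : List ℕ :=
  l.foldl (fun u x => gamma x u ++ [x]) []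

theorem phi_append_singleton (l : List ℕ) (x : ℕ) :
    phi (l ++ [x]) = gamma x (phi l) ++ [x] :=
  List.foldl_concat ..

theorem phi_perm (l : List ℕ) : (phi l).Perm l := by
  induction l using List.reverseRecOn with
  | nil => rfl
  | append_singleton l x ih =>
    rw [phi_append_singleton]
    exact ((gamma_perm x _).trans ih).append_right [x]

theorem getLastD_phi (l : List ℕ) : (phi l).getLastD 0 = l.getLastD 0 := by
  induction l using List.reverseRecOn with
  | nil => rfl
  | append_singleton l x ih => simp [phi_append_singleton]

theorem inv_phi (l : List ℕ) : inv (phi l) = maj l := by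
  induction l using List.reverseRecOn with
  | nil => rfl
  | append_singleton l x ih =>
    have hcount : (gamma x (phi l)).countP (x < ·) = l.countP (x < ·) :=
      ((gamma_perm x _).trans (phi_perm l)).countP_eq _
    rw [phi_append_singleton, inv_append_singleton, maj_append_singleton, hcount, ← ih,
      ← getLastD_phi]
    split
    · rw [inv_gamma_of_lt ‹_›, add_assoc, ← (phi_perm l).countP_eq,
        ← (phi_perm l).length_eq, List.length_eq_countP_add_countP (· ≤ x)]
      simp
    · rw [add_zero, ← (phi_perm l).countP_eq]
      exact inv_gamma_of_le (Nat.not_lt.1 ‹_›)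

theorem phi_injective : Function.Injective phi := by
  intro l l' h
  induction l using List.reverseRecOn generalizing l' with
  | nil =>
    have h' : phi l' = [] := h.symm
    exact List.Perm.nil_eq (h' ▸ phi_perm l')
  | append_singleton l x ih =>
    rcases List.eq_nil_or_concat l' with rfl | ⟨l', x', rfl⟩
    · simpa [phi] using (phi_perm _).length_eq.symm.trans (congrArg List.length h)
    rw [List.concat_eq_append, phi_append_singleton, phi_append_singleton] at h
    obtain ⟨h1, h2⟩ := List.append_inj' h rfl
    obtain rfl : x = x' := by simpa using h2
    rw [ih (gamma_inj h1), List.concat_eq_append]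

theorem filter_phi_pair {l : List ℕ} (hl : l.Nodup) (a : ℕ) :
    (phi l).filter (fun z => z = a ∨ z = a + 1) = l.filter (fun z => z = a ∨ z = a + 1) := by
  induction l using List.reverseRecOn with
  | nil => rfl
  | append_singleton l x ih =>
    rw [List.nodup_append] at hl
    have hx : x ∉ l := fun h => hl.2.2 x h x (List.mem_singleton_self x) rfl
    rw [phi_append_singleton, List.filter_append, List.filter_append, ← ih hl.1, filter_gamma]
    intro y hy z hz hqy hqz
    have : y ≠ x ∧ z ≠ x := by
      constructor <;> rintro rfl <;> simp_all [(phi_perm l).mem_iff]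
    simp only [decide_eq_true_eq] at hqy hqz
    omega

theorem idxOf_phi_lt_iff {l : List ℕ} (hl : l.Nodup) (a : ℕ) :
    (phi l).idxOf (a + 1) < (phi l).idxOf a ↔ l.idxOf (a + 1) < l.idxOf a := by
  have hpair := @List.idxOf_lt_idxOf_iff_filter _ _ (fun z => z = a ∨ z = a + 1) (a + 1) a
    (by simp) (by simp)
  rw [hpair (phi l), hpair l, filter_phi_pair hl]

end Foata

open Foata

section SignedPerm

variable {n : ℕ} {w : Equiv.Perm (Fin n × Bool)}

theorem IsSignedPerm.apply_mk (hw : IsSignedPerm w) (m : Fin n) (b : Bool) :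
    w (m, b) = ((w (m, false)).1, b ^^ (w (m, false)).2) := by
  cases b
  · simp
  · simpa using hw (m, false)

theorem oneLine_of_lt (w : Equiv.Perm (Fin n × Bool)) {m : ℕ} (hm : m < n) :
    oneLine w m = (((w (⟨m, hm⟩, false)).1 : ℕ), (w (⟨m, hm⟩, false)).2) :=
  dif_pos hm

theorem rOrd_lt_two_mul {a : ℕ} {b : Bool} (ha : a < n) : rOrd n (a, b) < 2 * n := by
  unfold rOrd; split <;> omega

theorem rOrd_mod {a : ℕ} {b : Bool} (ha : a < n) : rOrd n (a, b) % n = a := by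
  cases b <;> simp [rOrd, Nat.mod_eq_of_lt ha]

theorem rOrd_lt_iff {a : ℕ} {b : Bool} (ha : a < n) : rOrd n (a, b) < n ↔ b = true := by
  cases b <;> simp [rOrd, ha]

theorem rOrd_mod_decide_lt {r : ℕ} (hr : r < 2 * n) : rOrd n (r % n, decide (r < n)) = r := by
  unfold rOrd
  split
  · simp_all [Nat.mod_eq_of_lt]
  · rw [Nat.mod_eq_sub_mod (by simp_all), Nat.mod_eq_of_lt (by omega)]
    simp_all

/-- The one-line notation of `w`, the letter `(i, b)` written as its rank `rOrd n (i, b)`. -/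
def rankWord (w : Equiv.Perm (Fin n × Bool)) : List ℕ :=
  (List.range n).map fun m => rOrd n (oneLine w m)

theorem length_rankWord (w : Equiv.Perm (Fin n × Bool)) : (rankWord w).length = n := by
  simp [rankWord]

theorem getD_rankWord (w : Equiv.Perm (Fin n × Bool)) {m : ℕ} (hm : m < n) :
    (rankWord w).getD m 0 = rOrd n (oneLine w m) := by
  simp [rankWord, hm]

theorem invB_eq_inv (w : Equiv.Perm (Fin n × Bool)) : invB w = inv (rankWord w) := by
  rw [inv_eq_card, length_rankWord, invB]
  congr 1
  refine Finset.filter_congr fun ij hij => ?_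
  simp only [Finset.mem_product, Finset.mem_range] at hij
  rw [getD_rankWord w hij.1, getD_rankWord w hij.2]

theorem majB_eq_maj (w : Equiv.Perm (Fin n × Bool)) : majB w = maj (rankWord w) := by
  rw [maj, length_rankWord, majB]
  refine Finset.sum_congr rfl fun p hp => ?_
  simp only [Finset.mem_range] at hp
  rw [getD_rankWord w (by omega), getD_rankWord w (by omega)]

theorem barB_eq_countP (w : Equiv.Perm (Fin n × Bool)) :
    barB w = (rankWord w).countP (· < n) := by
  rw [barB, Finset.card_filter, List.countP_eq_sum_getD, length_rankWord]
  refine Finset.sum_congr rfl fun p hp => ?_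
  simp only [Finset.mem_range] at hp
  rw [getD_rankWord w hp, oneLine_of_lt w hp]
  cases (w (⟨p, hp⟩, false)).2 <;> simp [rOrd]

/-- The words `rankWord w` of signed permutations: every absolute value `r % n` occurs once. -/
structure IsSignedWord (n : ℕ) (l : List ℕ) : Prop where
  length_eq : l.length = n
  lt_two_mul : ∀ r ∈ l, r < 2 * n
  nodup_map_mod : (l.map (· % n)).Nodup

theorem IsSignedWord.of_perm {l l' : List ℕ} (hl : IsSignedWord n l) (h : l'.Perm l) :
    IsSignedWord n l' where
  length_eq := h.length_eq.trans hl.length_eq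
  lt_two_mul r hr := hl.lt_two_mul r (h.subset hr)
  nodup_map_mod := (h.map _).nodup_iff.2 hl.nodup_map_mod

theorem IsSignedWord.nodup {l : List ℕ} (hl : IsSignedWord n l) : l.Nodup :=
  hl.nodup_map_mod.of_map _

theorem IsSignedPerm.fst_injective (hw : IsSignedPerm w) :
    Function.Injective fun m : Fin n => (w (m, false)).1 := by
  intro m m' h
  have key : w (m, false) = w (m', (w (m, false)).2 ^^ (w (m', false)).2) := by
    rw [hw.apply_mk m']
    ext <;> simp [h]
  exact (Prod.ext_iff.1 (w.injective key)).1

theorem isSignedWord_rankWord (hw : IsSignedPerm w) : IsSignedWord n (rankWord w) where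
  length_eq := length_rankWord w
  lt_two_mul r hr := by
    obtain ⟨m, hm, rfl⟩ := by simpa [rankWord] using hr
    rw [oneLine_of_lt w hm]
    exact rOrd_lt_two_mul (Fin.isLt _)
  nodup_map_mod := by
    rw [rankWord, List.map_map]
    refine List.Nodup.map_on (fun m hm m' hm' h => ?_) List.nodup_range
    simp only [List.mem_range] at hm hm'
    simp only [Function.comp, oneLine_of_lt w hm, oneLine_of_lt w hm', rOrd_mod (Fin.isLt _)] at h
    simpa using congrArg Fin.val (hw.fst_injective (Fin.ext h))

def decodeWord (n : ℕ) (l : List ℕ) (z : Fin n × Bool) : Fin n × Bool :=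
  (⟨l.getD z.1 0 % n, Nat.mod_lt _ z.1.pos⟩, z.2 ^^ decide (l.getD z.1 0 < n))

theorem decodeWord_injective {l : List ℕ} (hl : IsSignedWord n l) :
    Function.Injective (decodeWord n l) := by
  rintro ⟨m, b⟩ ⟨m', b'⟩ h
  simp only [decodeWord, Prod.mk.injEq, Fin.mk.injEq] at h
  have hm : (m : ℕ) < (l.map (· % n)).length := by simp [hl.length_eq]
  have hm' : (m' : ℕ) < (l.map (· % n)).length := by simp [hl.length_eq]
  obtain rfl : m = m' := Fin.ext <| (hl.nodup_map_mod.getElem_inj_iff (hi := hm) (hj := hm')).1 <|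
    by simpa [List.getD_eq_getElem, hl.length_eq] using h.1
  simpa using h.2

noncomputable def ofSignedWord (l : List ℕ) (hl : IsSignedWord n l) :
    Equiv.Perm (Fin n × Bool) :=
  Equiv.ofBijective _ (Finite.injective_iff_bijective.1 (decodeWord_injective hl))

theorem isSignedPerm_ofSignedWord {l : List ℕ} (hl : IsSignedWord n l) :
    IsSignedPerm (ofSignedWord l hl) := by
  rintro ⟨m, b⟩
  simp [ofSignedWord, decodeWord]

theorem rankWord_ofSignedWord {l : List ℕ} (hl : IsSignedWord n l) :
    rankWord (ofSignedWord l hl) = l := by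
  refine List.ext_getElem (by rw [length_rankWord, hl.length_eq]) fun m hm hm' => ?_
  rw [length_rankWord] at hm
  rw [← List.getD_eq_getElem _ 0, ← List.getD_eq_getElem _ 0, getD_rankWord _ hm,
    oneLine_of_lt _ hm]
  simp only [ofSignedWord, Equiv.ofBijective_apply, decodeWord, Bool.false_xor]
  exact rOrd_mod_decide_lt (hl.lt_two_mul _ (List.getD_eq_getElem _ 0 hm' ▸ List.getElem_mem hm'))

theorem ofSignedWord_rankWord (hw : IsSignedPerm w) :
    ofSignedWord (rankWord w) (isSignedWord_rankWord hw) = w := by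
  ext ⟨m, b⟩ : 1
  simp only [ofSignedWord, Equiv.ofBijective_apply, decodeWord, getD_rankWord _ m.isLt,
    oneLine_of_lt _ m.isLt, rOrd_mod (Fin.isLt _), rOrd_lt_iff (Fin.isLt _), hw.apply_mk m b]
  simp

theorem eq_of_rankWord_eq {w' : Equiv.Perm (Fin n × Bool)} (hw : IsSignedPerm w)
    (hw' : IsSignedPerm w') (h : rankWord w = rankWord w') : w = w' := by
  rw [← ofSignedWord_rankWord hw, ← ofSignedWord_rankWord hw']
  congr 1

theorem getD_rankWord_oneLine_symm (hw : IsSignedPerm w) {p : ℕ} (hp : p < n) :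
    (oneLine w.symm p).1 < n ∧
      (rankWord w).getD (oneLine w.symm p).1 0 = rOrd n (p, (oneLine w.symm p).2) := by
  obtain ⟨⟨m, b⟩, hz⟩ : ∃ z, w.symm (⟨p, hp⟩, false) = z := ⟨_, rfl⟩
  have hwz : w (m, b) = (⟨p, hp⟩, false) := by rw [← hz, Equiv.apply_symm_apply]
  rw [hw.apply_mk, Prod.mk.injEq] at hwz
  rw [oneLine_of_lt _ hp, hz, getD_rankWord _ m.isLt, oneLine_of_lt _ m.isLt]
  refine ⟨m.isLt, ?_⟩
  cases b <;> simp_all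

theorem snd_oneLine_symm (hw : IsSignedPerm w) {p : ℕ} (hp : p < n) :
    (oneLine w.symm p).2 = decide (p ∈ rankWord w) := by
  obtain ⟨hlt, hget⟩ := getD_rankWord_oneLine_symm hw hp
  have hmem : rOrd n (p, (oneLine w.symm p).2) ∈ rankWord w := by
    rw [← hget, List.getD_eq_getElem _ _ (by rwa [length_rankWord])]
    exact List.getElem_mem _
  cases hb : (oneLine w.symm p).2
  · rw [hb] at hmem
    refine (decide_eq_false fun hp' => ?_).symm
    have : p = n + p := List.inj_on_of_nodup_map (isSignedWord_rankWord hw).nodup_map_mod hp' hmem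
      (by simp [Nat.mod_eq_of_lt hp])
    omega
  · simpa [hb, rOrd] using hmem

theorem fst_oneLine_symm (hw : IsSignedPerm w) {p : ℕ} (hp : p < n) :
    (oneLine w.symm p).1 = (rankWord w).idxOf (rOrd n (p, (oneLine w.symm p).2)) := by
  obtain ⟨hlt, hget⟩ := getD_rankWord_oneLine_symm hw hp
  rw [← hget, List.getD_eq_getElem _ _ (by rwa [length_rankWord]),
    (isSignedWord_rankWord hw).nodup.idxOf_getElem]

theorem sDesPerm_symm_cond_iff (hw : IsSignedPerm w) {p : ℕ} (hp : p + 1 < n) :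
    (rOrd n (oneLine w.symm (p + 1)) < rOrd n (oneLine w.symm p) ∨
        ((oneLine w.symm p).2 = true ∧ (oneLine w.symm (p + 1)).2 = false)) ↔
      (decide (p ∈ rankWord w) ≠ decide (p + 1 ∈ rankWord w) ∨
        (rankWord w).idxOf (rOrd n (p, decide (p ∈ rankWord w)) + 1) <
          (rankWord w).idxOf (rOrd n (p, decide (p ∈ rankWord w)))) := by
  have hlt := (getD_rankWord_oneLine_symm hw hp).1
  have h0 := fst_oneLine_symm hw (p := p) (by omega)
  have h1 := fst_oneLine_symm hw hp
  rw [← snd_oneLine_symm hw (p := p) (by omega), ← snd_oneLine_symm hw hp]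
  generalize oneLine w.symm p = v at *
  generalize oneLine w.symm (p + 1) = v' at *
  obtain ⟨i, b⟩ := v
  obtain ⟨i', b'⟩ := v'
  simp only at h0 h1 hlt ⊢
  cases b <;> cases b'
  · simp [rOrd, h0, h1, ← add_assoc]
  · exact iff_of_true (Or.inl (show i' < n + i by omega)) (Or.inl (by decide))
  · exact iff_of_true (Or.inr ⟨rfl, rfl⟩) (Or.inl (by decide))
  · simp [rOrd, h0, h1]

theorem sDesPerm_symm_eq_of_rankWord {w' : Equiv.Perm (Fin n × Bool)} (hw : IsSignedPerm w)
    (hw' : IsSignedPerm w') (hmem : ∀ r, r ∈ rankWord w' ↔ r ∈ rankWord w)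
    (hidx : ∀ a, (rankWord w').idxOf (a + 1) < (rankWord w').idxOf a ↔
      (rankWord w).idxOf (a + 1) < (rankWord w).idxOf a) :
    sDesPerm w'.symm = sDesPerm w.symm := by
  funext p
  unfold sDesPerm
  rcases lt_trichotomy (p + 1) n with h | h | h
  · simp only [h.ne, h, if_false, true_and, sDesPerm_symm_cond_iff hw' h,
      sDesPerm_symm_cond_iff hw h]
    simp only [snd_oneLine_symm hw' (p := p) (by omega), snd_oneLine_symm hw (p := p) (by omega),
      hmem, hidx]
  · simp only [h, if_true, snd_oneLine_symm hw' (p := p) (by omega),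
      snd_oneLine_symm hw (p := p) (by omega), hmem]
  · simp [h.ne', Nat.not_lt_of_gt h]

open Classical in
/-- Foata's bijection transported to `B_n`; the identity on other permutations. -/
noncomputable def foataB (w : Equiv.Perm (Fin n × Bool)) : Equiv.Perm (Fin n × Bool) :=
  if hw : IsSignedPerm w then
    ofSignedWord (phi (rankWord w)) ((isSignedWord_rankWord hw).of_perm (phi_perm _))
  else w

theorem rankWord_foataB (hw : IsSignedPerm w) : rankWord (foataB w) = phi (rankWord w) := by
  rw [foataB, dif_pos hw, rankWord_ofSignedWord]

theorem isSignedPerm_foataB (hw : IsSignedPerm w) : IsSignedPerm (foataB w) := by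
  rw [foataB, dif_pos hw]
  exact isSignedPerm_ofSignedWord _

theorem finvB_foataB (hw : IsSignedPerm w) : finvB (foataB w) = fmajB w := by
  rw [finvB, fmajB, invB_eq_inv, barB_eq_countP, barB_eq_countP, rankWord_foataB hw, inv_phi,
    majB_eq_maj, (phi_perm _).countP_eq]

theorem sDesPerm_symm_foataB (hw : IsSignedPerm w) :
    sDesPerm (foataB w).symm = sDesPerm w.symm := by
  refine sDesPerm_symm_eq_of_rankWord hw (isSignedPerm_foataB hw) (fun r => ?_) fun a => ?_
  · rw [rankWord_foataB hw, (phi_perm _).mem_iff]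
  · rw [rankWord_foataB hw, idxOf_phi_lt_iff (isSignedWord_rankWord hw).nodup]

theorem foataB_injOn : Set.InjOn foataB {w : Equiv.Perm (Fin n × Bool) | IsSignedPerm w} :=
  fun w hw w' hw' h => eq_of_rankWord_eq hw hw' <| phi_injective <| by
    rw [← rankWord_foataB hw, ← rankWord_foataB hw', h]

end SignedPerm

theorem Set.ncard_sep_eq_of_injOn {α : Type*} {s : Set α} (hs : s.Finite) {f : α → α}
    (hmaps : Set.MapsTo f s s) (hinj : Set.InjOn f s) {P Q : α → Prop}
    (hPQ : ∀ x ∈ s, P (f x) ↔ Q x) :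
    {x | x ∈ s ∧ P x}.ncard = {x | x ∈ s ∧ Q x}.ncard := by
  have hbij := (hs.injOn_iff_bijOn_of_mapsTo hmaps).1 hinj
  have himage : {x | x ∈ s ∧ P x} = f '' {x | x ∈ s ∧ Q x} := by
    ext y
    constructor
    · rintro ⟨hy, hPy⟩
      obtain ⟨x, hx, rfl⟩ := hbij.surjOn hy
      exact ⟨x, ⟨hx, (hPQ x hx).1 hPy⟩, rfl⟩
    · rintro ⟨x, ⟨hx, hQx⟩, rfl⟩
      exact ⟨hmaps hx, (hPQ x hx).2 hQx⟩
  rw [himage, (hinj.mono fun x hx => hx.1).ncard_image]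

theorem finv_fmaj_equidistributed_general (n : ℕ) (k : ℕ)
    (σ : ℕ → Option Bool) :
    Set.ncard { w : Equiv.Perm (Fin n × Bool) |
        IsSignedPerm w ∧ sDesPerm w.symm = σ ∧ finvB w = k }
      = Set.ncard { w : Equiv.Perm (Fin n × Bool) |
        IsSignedPerm w ∧ sDesPerm w.symm = σ ∧ fmajB w = k } :=
  Set.ncard_sep_eq_of_injOn (Set.toFinite _) (fun _ hw => isSignedPerm_foataB hw) foataB_injOn
    fun w hw => by rw [sDesPerm_symm_foataB hw, finvB_foataB hw]

/-- For every `n`, `k` and signed set `σ ∈ Σ^B(n)`, the number of signed permutations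
`w ∈ B_n` with `sDes(w⁻¹) = σ` and `finv(w) = k` equals the number of `w ∈ B_n` with
`sDes(w⁻¹) = σ` and `fmaj(w) = k`. -/
theorem finv_fmaj_equidistributed (n : ℕ) (hn : 0 < n) (k : ℕ)
    (σ : ℕ → Option Bool) (hσ : σ (n - 1) ≠ none ∧ ∀ p, n ≤ p → σ p = none) :
    Set.ncard { w : Equiv.Perm (Fin n × Bool) |
        IsSignedPerm w ∧ sDesPerm w.symm = σ ∧ finvB w = k }
      = Set.ncard { w : Equiv.Perm (Fin n × Bool) |
        IsSignedPerm w ∧ sDesPerm w.symm = σ ∧ fmajB w = k } :=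
  finv_fmaj_equidistributed_general n k σ
end

section
/- For n ≥ 2, the number of B-arc permutations in B_n equals n·2^n, where w ∈ B_n is a B-arc permutation if, identifying Ω_n with ℤ_{2n} by sending i ↦ i and ī ↦ n+i, the set {w(i), w(i+1), ..., w(n)} is an interval in ℤ_{2n} for every i ∈ [n]. -/
open Finset

/-- The identification of `Ω_n = {1,...,n,1̄,...,n̄}` with `ℤ_{2n}`, sending `i ↦ i`
and `ī ↦ n + i`. -/
def omegaToZMod (n : ℕ) (v : ℕ × Bool) : ZMod (2 * n) :=
  if v.2 then ((n + v.1 + 1 : ℕ) : ZMod (2 * n)) else ((v.1 + 1 : ℕ) : ZMod (2 * n))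

/-- `w ∈ B_n` is a B-arc permutation if `{w(i), w(i+1), ..., w(n)}` is an interval in
`ℤ_{2n}` for every `i ∈ [n]`. -/
def IsBArc {n : ℕ} (w : Equiv.Perm (Fin n × Bool)) : Prop :=
  ∀ i : Fin n, ∃ a : ZMod (2 * n),
    ((Finset.univ.filter fun p : Fin n => i ≤ p).image
        fun p : Fin n => omegaToZMod n (oneLine w (p : ℕ)))
      = (Finset.range (n - (i : ℕ))).image fun j => a + (j : ℕ)

/-!
Through `omegaEquiv : Fin n × Bool ≃ ℤ_{2n}`, a signed permutation `w` is determined by its word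
`v = (ω w(1), …, ω w(n))`, and `w` is a B-arc permutation iff every suffix of `v` is a cyclic
interval (an arc word). Conversely every arc word of length `n` comes from a signed permutation:
its image is an interval of length `n`, which together with its translate by `n` (barring)
covers `ℤ_{2n}` exactly once. Arc words are counted from the right: the last letter is
arbitrary (`2n` choices) and each earlier letter must extend the current arc of length `m` at one
of its two ends, which are distinct and the only possibilities because `2m < 2n`. Hence there are
`2n · 2^(n-1) = n · 2^n` of them.
-/

namespace BArc

section Arc

variable {N : ℕ}

def arc (a : ZMod N) (k : ℕ) : Finset (ZMod N) :=
  (range k).image fun j : ℕ => a + (j : ZMod N)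

lemma arc_succ (a : ZMod N) (k : ℕ) : arc a (k + 1) = insert (a + k) (arc a k) := by
  rw [arc, range_add_one, image_insert, arc]

lemma arc_sub_one_succ (a : ZMod N) (k : ℕ) :
    arc (a - 1) (k + 1) = insert (a - 1) (arc a k) := by
  rw [arc, range_add_one', image_insert, map_eq_image, image_image, arc]
  congr 2
  · simp
  · ext j
    change a - 1 + ((j + 1 : ℕ) : ZMod N) = a + j
    push_cast; ring

lemma card_arc (a : ZMod N) {k : ℕ} (hk : k ≤ N) : #(arc a k) = k := by
  rw [arc, card_image_of_injOn, card_range]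
  intro i hi j hj hij
  simp only [coe_range, Set.mem_Iio] at hi hj
  have := (ZMod.natCast_eq_natCast_iff' i j N).mp (add_left_cancel hij)
  rwa [Nat.mod_eq_of_lt (by omega), Nat.mod_eq_of_lt (by omega)] at this

variable [NeZero N]

lemma mem_arc {a x : ZMod N} {k : ℕ} (hk : k ≤ N) : x ∈ arc a k ↔ (x - a).val < k := by
  simp only [arc, mem_image, mem_range]
  constructor
  · rintro ⟨j, hj, rfl⟩
    rwa [add_sub_cancel_left, ZMod.val_natCast_of_lt (by omega)]
  · exact fun h => ⟨(x - a).val, h, by rw [ZMod.natCast_zmod_val, add_sub_cancel]⟩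

lemma exists_insert_eq_arc_iff {b x : ZMod N} {m : ℕ} (hm : 1 ≤ m) (hmN : 2 * m < N) :
    (∃ a, insert x (arc b m) = arc a (m + 1)) ↔ x = b - 1 ∨ x = b + m := by
  constructor
  · rintro ⟨a, h⟩
    have hx : x ∉ arc b m := fun hx => by
      have := congrArg card h
      rw [insert_eq_of_mem hx, card_arc _ (by omega), card_arc _ (by omega)] at this
      omega
    have hsub : ∀ y ∈ arc b m, (y - a).val ≤ m := fun y hy => by
      have := (mem_arc (by omega)).mp (h ▸ mem_insert_of_mem hy : y ∈ arc a (m + 1))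
      omega
    -- Both ends of `arc b m` lie in `arc a (m + 1)`; as `2 * m < N` this forces `b - a ∈ {0, 1}`.
    have hfirst := hsub b ((mem_arc (by omega)).mpr (by simp; omega))
    have hlast := hsub (b + (m - 1 : ℕ)) ((mem_arc (by omega)).mpr (by
      rw [add_sub_cancel_left, ZMod.val_natCast_of_lt (by omega)]; omega))
    rw [show b + ((m - 1 : ℕ) : ZMod N) - a = (b - a) + ((m - 1 : ℕ) : ZMod N) by ring,
      ZMod.val_add_of_lt, ZMod.val_natCast_of_lt (by omega)] at hlast
    swap
    · rw [ZMod.val_natCast_of_lt (by omega)]; omega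
    have hab : a = b ∨ a = b - 1 := by
      rcases (by omega : (b - a).val = 0 ∨ (b - a).val = 1) with h0 | h1
      · exact .inl (sub_eq_zero.mp ((ZMod.val_eq_zero _).mp h0)).symm
      · right
        have : b - a = 1 := by rw [← ZMod.natCast_zmod_val (b - a), h1, Nat.cast_one]
        linear_combination -this
    rcases hab with rfl | rfl
    · rw [arc_succ] at h
      have := h ▸ mem_insert_self x (arc a m)
      exact .inr ((mem_insert.mp this).resolve_right hx)
    · rw [arc_sub_one_succ] at h
      have := h ▸ mem_insert_self x (arc b m)
      exact .inl ((mem_insert.mp this).resolve_right hx)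
  · rintro (rfl | rfl)
    · exact ⟨b - 1, (arc_sub_one_succ b m).symm⟩
    · exact ⟨b, (arc_succ b m).symm⟩

end Arc

section ArcWord

variable {N m : ℕ}

def IsArcWord (v : Fin m → ZMod N) : Prop :=
  ∀ i : Fin m, ∃ a, (univ.filter fun p => i ≤ p).image v = arc a (m - i)

lemma IsArcWord.exists_image_univ_eq_arc {v : Fin m → ZMod N} (hv : IsArcWord v)
    (hm : 0 < m) : ∃ a, univ.image v = arc a m := by
  simpa [Fin.le_iff_val_le_val] using hv ⟨0, hm⟩

lemma isArcWord_cons_iff_exists {x : ZMod N} {t : Fin m → ZMod N} :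
    IsArcWord (Fin.cons x t : Fin (m + 1) → ZMod N) ↔
      IsArcWord t ∧ ∃ a, insert x (univ.image t) = arc a (m + 1) := by
  have hsucc (i : Fin m) :
      (univ.filter fun p => i.succ ≤ p).image (Fin.cons x t : Fin (m + 1) → ZMod N) =
        (univ.filter fun p => i ≤ p).image t := by
    ext y
    simp [Fin.exists_fin_succ, Fin.succ_le_succ_iff]
  have hzero : (univ.filter fun p => 0 ≤ p).image (Fin.cons x t : Fin (m + 1) → ZMod N) =
      insert x (univ.image t) := by
    ext y
    simp [Fin.exists_fin_succ, eq_comm]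
  rw [IsArcWord, Fin.forall_fin_succ, and_comm]
  simp only [hsucc, hzero, Fin.val_succ, Fin.val_zero, Nat.add_sub_add_right, Nat.sub_zero]
  rfl

open Classical in
noncomputable def arcWords (N m : ℕ) [NeZero N] : Finset (Fin m → ZMod N) :=
  univ.filter IsArcWord

variable [NeZero N]

lemma isArcWord_cons_iff {x b : ZMod N} {t : Fin m → ZMod N} (hm : 1 ≤ m)
    (hmN : 2 * m < N) (ht : univ.image t = arc b m) :
    IsArcWord (Fin.cons x t : Fin (m + 1) → ZMod N) ↔
      IsArcWord t ∧ (x = b - 1 ∨ x = b + m) := by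
  rw [isArcWord_cons_iff_exists, ht, exists_insert_eq_arc_iff hm hmN]

lemma mem_arcWords {v : Fin m → ZMod N} : v ∈ arcWords N m ↔ IsArcWord v := by
  simp [arcWords]

lemma card_arcWords_one : #(arcWords N 1) = N := by
  have : arcWords N 1 = univ := eq_univ_of_forall fun v => mem_arcWords.mpr fun i =>
    ⟨v 0, by fin_cases i; simp [arc]⟩
  rw [this, card_univ, Fintype.card_fun, ZMod.card, Fintype.card_fin, pow_one]

lemma card_filter_tail_eq (hm : 1 ≤ m) (hmN : 2 * m < N) {t : Fin m → ZMod N}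
    (ht : t ∈ arcWords N m) : #{v ∈ arcWords N (m + 1) | Fin.tail v = t} = 2 := by
  obtain ⟨b, hb⟩ := (mem_arcWords.mp ht).exists_image_univ_eq_arc (by omega)
  have hfiber : {v ∈ arcWords N (m + 1) | Fin.tail v = t} =
      ({b - 1, b + m} : Finset (ZMod N)).image (Fin.cons · t) := by
    ext v
    obtain ⟨x, s, rfl⟩ : ∃ x s, v = Fin.cons x s :=
      ⟨v 0, Fin.tail v, (Fin.cons_self_tail v).symm⟩
    simp only [mem_filter, mem_arcWords, Fin.tail_cons, mem_image, mem_insert, mem_singleton]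
    constructor
    · rintro ⟨h, rfl⟩
      exact ⟨x, ((isArcWord_cons_iff hm hmN hb).mp h).2, rfl⟩
    · rintro ⟨y, hy, h⟩
      obtain ⟨rfl, rfl⟩ := Fin.cons_injective2 h
      exact ⟨(isArcWord_cons_iff hm hmN hb).mpr ⟨mem_arcWords.mp ht, hy⟩, rfl⟩
  rw [hfiber, card_image_of_injective _ (Fin.cons_left_injective (α := fun _ => ZMod N) t),
    card_pair]
  intro h
  have : ((m + 1 : ℕ) : ZMod N) = 0 := by push_cast; linear_combination -h
  rw [ZMod.natCast_eq_zero_iff] at this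
  exact absurd (Nat.le_of_dvd (by omega) this) (by omega)

lemma card_arcWords_succ (hm : 1 ≤ m) (hmN : 2 * m < N) :
    #(arcWords N (m + 1)) = 2 * #(arcWords N m) := by
  have hmaps : Set.MapsTo Fin.tail (arcWords N (m + 1) : Set (Fin (m + 1) → ZMod N))
      (arcWords N m) := fun v hv => by
    rw [mem_coe, mem_arcWords, ← Fin.cons_self_tail v, isArcWord_cons_iff_exists] at hv
    exact mem_arcWords.mpr hv.1
  rw [card_eq_sum_card_fiberwise hmaps, sum_congr rfl fun t => card_filter_tail_eq hm hmN,
    sum_const, smul_eq_mul, mul_comm]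

theorem card_arcWords (hmN : 2 * m < N) : #(arcWords N (m + 1)) = N * 2 ^ m := by
  induction m with
  | zero => rw [card_arcWords_one, pow_zero, mul_one]
  | succ m ih =>
    rw [card_arcWords_succ (by omega) hmN, ih (by omega)]
    ring

end ArcWord

section SignedPerm

variable {n : ℕ}

lemma omegaToZMod_mk (k : Fin n) (b : Bool) :
    omegaToZMod n (k, b) = ((k + bif b then n else 0 : ℕ) : ZMod (2 * n)) + 1 := by
  cases b <;> simp [omegaToZMod]
  ring

lemma omegaToZMod_injective :
    Function.Injective fun p : Fin n × Bool => omegaToZMod n (p.1, p.2) := by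
  rintro ⟨k, b⟩ ⟨l, c⟩ h
  simp only [omegaToZMod_mk, add_left_inj, ZMod.natCast_eq_natCast_iff'] at h
  rw [Nat.mod_eq_of_lt (by cases b <;> simp <;> omega),
    Nat.mod_eq_of_lt (by cases c <;> simp <;> omega)] at h
  cases b <;> cases c <;> simp at h <;> simp [Fin.ext_iff] <;> omega

def word (w : Equiv.Perm (Fin n × Bool)) (p : Fin n) : ZMod (2 * n) :=
  omegaToZMod n (oneLine w p)

lemma isBArc_iff_isArcWord_word {w : Equiv.Perm (Fin n × Bool)} :
    IsBArc w ↔ IsArcWord (word w) := Iff.rfl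

variable [NeZero n]

noncomputable def omegaEquiv : Fin n × Bool ≃ ZMod (2 * n) :=
  Equiv.ofBijective _ ((Fintype.bijective_iff_injective_and_card _).mpr
    ⟨omegaToZMod_injective, by simp [ZMod.card, mul_comm]⟩)

lemma omegaEquiv_apply (p : Fin n × Bool) : omegaEquiv p = omegaToZMod n (p.1, p.2) := rfl

lemma omegaEquiv_not (k : Fin n) (b : Bool) : omegaEquiv (k, !b) = omegaEquiv (k, b) + n := by
  have h2n : ((2 * n : ℕ) : ZMod (2 * n)) = 0 := ZMod.natCast_self _
  cases b <;>
    simp only [omegaEquiv_apply, omegaToZMod_mk, Bool.not_false, Bool.not_true, cond_true,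
      cond_false] <;> push_cast at h2n ⊢
  · ring
  · linear_combination -h2n

lemma word_apply (w : Equiv.Perm (Fin n × Bool)) (p : Fin n) :
    word w p = omegaEquiv (w (p, false)) := by
  simp [word, oneLine, omegaEquiv_apply]

lemma IsSignedPerm.ext_word {w w' : Equiv.Perm (Fin n × Bool)} (hw : IsSignedPerm w)
    (hw' : IsSignedPerm w') (h : word w = word w') : w = w' := by
  have hfalse (p : Fin n) : w (p, false) = w' (p, false) := by
    simpa [word_apply] using congrFun h p
  ext1 ⟨p, b⟩
  cases b
  · exact hfalse p
  · rw [show (p, true) = ((p, false).1, !(p, false).2) from rfl, hw, hw', hfalse]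

/-- For `v = word w` with `w` signed, this is `omegaEquiv ∘ w`: barring a letter adds `n`. -/
def signedWord (v : Fin n → ZMod (2 * n)) (q : Fin n × Bool) : ZMod (2 * n) :=
  v q.1 + bif q.2 then n else 0

noncomputable def permOfWord (v : Fin n → ZMod (2 * n))
    (hv : Function.Surjective (signedWord v)) : Equiv.Perm (Fin n × Bool) :=
  Equiv.ofBijective (omegaEquiv.symm ∘ signedWord v)
    (omegaEquiv.symm.surjective.comp hv).bijective_of_finite

lemma isSignedPerm_permOfWord (v : Fin n → ZMod (2 * n))
    (hv : Function.Surjective (signedWord v)) : IsSignedPerm (permOfWord v hv) := by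
  rintro ⟨p, b⟩
  apply omegaEquiv.injective
  rw [omegaEquiv_not, Prod.mk.eta]
  simp only [permOfWord, Equiv.ofBijective_apply, Function.comp_apply, Equiv.apply_symm_apply,
    signedWord]
  have h2n : ((2 * n : ℕ) : ZMod (2 * n)) = 0 := ZMod.natCast_self _
  cases b <;> simp only [Bool.not_false, Bool.not_true, cond_true, cond_false] <;>
    push_cast at h2n ⊢
  · ring
  · linear_combination -h2n

lemma word_permOfWord (v : Fin n → ZMod (2 * n)) (hv : Function.Surjective (signedWord v)) :
    word (permOfWord v hv) = v := by
  ext p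
  simp [word_apply, permOfWord, signedWord]

lemma IsArcWord.surjective_signedWord {v : Fin n → ZMod (2 * n)} (hv : IsArcWord v) :
    Function.Surjective (signedWord v) := by
  have hn := Nat.pos_of_neZero n
  obtain ⟨a, ha⟩ := hv.exists_image_univ_eq_arc hn
  have hmem {z : ZMod (2 * n)} (hz : (z - a).val < n) : ∃ p, v p = z := by
    simpa [← ha] using (mem_arc (by omega)).mpr hz
  intro z
  by_cases hz : (z - a).val < n
  · obtain ⟨p, hp⟩ := hmem hz
    exact ⟨(p, false), by simp [signedWord, hp]⟩
  · obtain ⟨p, hp⟩ := hmem (z := z - n) (by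
      rw [sub_right_comm, ZMod.val_sub] <;> rw [ZMod.val_natCast_of_lt (by omega)]
      · have := (z - a).val_lt; omega
      · omega)
    exact ⟨(p, true), by simp [signedWord, hp]⟩

noncomputable def signedArcEquiv :
    { w : Equiv.Perm (Fin n × Bool) // IsSignedPerm w ∧ IsBArc w } ≃
      { v : Fin n → ZMod (2 * n) // IsArcWord v } where
  toFun w := ⟨word w, w.2.2⟩
  invFun v := ⟨permOfWord v v.2.surjective_signedWord, isSignedPerm_permOfWord _ _,
    isBArc_iff_isArcWord_word.mpr (by rw [word_permOfWord]; exact v.2)⟩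
  left_inv w := by
    have hv := (isBArc_iff_isArcWord_word.mp w.2.2).surjective_signedWord
    exact Subtype.ext <|
      IsSignedPerm.ext_word (isSignedPerm_permOfWord _ hv) w.2.1 (word_permOfWord _ hv)
  right_inv v := Subtype.ext <| word_permOfWord _ v.2.surjective_signedWord

end SignedPerm

end BArc

/-- For `n ≥ 2`, the number of B-arc permutations in `B_n` equals `n · 2^n`. -/
theorem card_BArc (n : ℕ) (hn : 2 ≤ n) :
    Nat.card { w : Equiv.Perm (Fin n × Bool) // IsSignedPerm w ∧ IsBArc w }
      = n * 2 ^ n := by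
  have : NeZero n := ⟨by omega⟩
  rw [Nat.card_congr BArc.signedArcEquiv,
    Nat.card_congr (Equiv.subtypeEquivRight fun _ => BArc.mem_arcWords.symm),
    Nat.card_eq_finsetCard]
  obtain ⟨m, rfl⟩ : ∃ m, n = m + 1 := ⟨n - 1, by omega⟩
  rw [BArc.card_arcWords (by omega)]
  ring
end

section
/- For n ≥ 2, the number of signed arc permutations in B_n equals n·2^n. -/
open Finset

/-- The absolute value `|w(q+1)|` of the `(q+1)`-st letter of `w`, viewed in `ℤ_n`
(identifying `n` with `0`). -/
def absValZ (n : ℕ) {m : ℕ} (w : Equiv.Perm (Fin m × Bool)) (q : ℕ) : ZMod n :=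
  (((oneLine w q).1 + 1 : ℕ) : ZMod n)

/-- `w ∈ B_n` is a signed arc permutation if for each `i ∈ {2, ..., n−1}`:
(a) `{|w(1)|, ..., |w(i−1)|}` is an interval in `ℤ_n`, and
(b) `w(i)` is unbarred if `|w(i)| − 1` lies in that set (mod `n`), and barred if
`|w(i)| + 1` lies in that set (mod `n`). -/
def IsSignedArc {n : ℕ} (w : Equiv.Perm (Fin n × Bool)) : Prop :=
  ∀ i : ℕ, 2 ≤ i → i ≤ n - 1 →
    (∃ a : ZMod n,
      ((Finset.range (i - 1)).image fun q => absValZ n w q)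
        = (Finset.range (i - 1)).image fun j => a + (j : ℕ)) ∧
    ((absValZ n w (i - 1) - 1 ∈ (Finset.range (i - 1)).image fun q => absValZ n w q) →
      (oneLine w (i - 1)).2 = false) ∧
    ((absValZ n w (i - 1) + 1 ∈ (Finset.range (i - 1)).image fun q => absValZ n w q) →
      (oneLine w (i - 1)).2 = true)

/-!
The absolute values of a signed arc permutation trace a walk on the cycle `ℤ_n`: each prefix of
the word fills an arc, and the next letter adds one neighbouring point, the left one exactly when
the letter is barred (condition (b)). Once the arc has `n - 1` points only one is left, so the
last letter is forced and its sign is free. Treating the first letter as a step from the empty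
arc at some `a`, so that its sign only shifts `a`, the word is determined by `a` and the signs,
and conversely each of the `n · 2^n` pairs `(a, ε) ∈ ℤ_n × Bool^n` yields a signed arc
permutation.
-/

variable {n : ℕ}

namespace SignedArc

def arc (c : ZMod n) (k : ℕ) : Finset (ZMod n) :=
  (range k).image fun j : ℕ => c + (j : ZMod n)

lemma mem_arc {c x : ZMod n} {k : ℕ} : x ∈ arc c k ↔ ∃ j < k, c + (j : ZMod n) = x := by
  simp [arc]

lemma add_natCast_mem_arc (c : ZMod n) {j k : ℕ} (hj : j < k) : c + (j : ZMod n) ∈ arc c k :=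
  mem_arc.2 ⟨j, hj, rfl⟩

lemma add_natCast_mem_arc_iff {c : ZMod n} {j k : ℕ} (hj : j < n) (hk : k ≤ n) :
    c + (j : ZMod n) ∈ arc c k ↔ j < k := by
  refine ⟨fun h => ?_, add_natCast_mem_arc c⟩
  obtain ⟨i, hi, hij⟩ := mem_arc.1 h
  have := congrArg ZMod.val (add_left_cancel hij)
  rw [ZMod.val_natCast_of_lt (by omega), ZMod.val_natCast_of_lt hj] at this
  omega

lemma sub_natCast_eq_add (c : ZMod n) {m : ℕ} (hm : m ≤ n) :
    c - m = c + ((n - m : ℕ) : ZMod n) := by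
  rw [Nat.cast_sub hm, ZMod.natCast_self]
  ring

lemma sub_natCast_notMem_arc (c : ZMod n) {m k : ℕ} (hm : 1 ≤ m) (hkm : k + m ≤ n) :
    c - m ∉ arc c k := by
  rw [sub_natCast_eq_add c (by omega), add_natCast_mem_arc_iff (by omega) (by omega)]
  omega

lemma arc_add_one (c : ZMod n) (k : ℕ) : arc c (k + 1) = insert (c + k) (arc c k) := by
  rw [arc, range_add_one, image_insert]
  rfl

lemma arc_sub_one_add_one (c : ZMod n) (k : ℕ) :
    arc (c - 1) (k + 1) = insert (c - 1) (arc c k) := by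
  ext x
  simp only [mem_insert, mem_arc]
  constructor
  · rintro ⟨_ | j, hj, rfl⟩
    · simp
    · exact Or.inr ⟨j, by omega, by push_cast; ring⟩
  · rintro (rfl | ⟨j, hj, rfl⟩)
    · exact ⟨0, by omega, by simp⟩
    · exact ⟨j + 1, by omega, by push_cast; ring⟩

lemma arc_eq_univ [NeZero n] (c : ZMod n) : arc c n = univ := by
  refine eq_univ_of_forall fun x => mem_arc.2 ⟨(x - c).val, ZMod.val_lt _, ?_⟩
  rw [ZMod.natCast_zmod_val]
  ring

lemma eq_add_of_mem_arc_of_add_one_notMem {b y : ZMod n} {m : ℕ} (hy : y ∈ arc b m)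
    (hy1 : y + 1 ∉ arc b m) : y = b + (m - 1 : ℕ) := by
  obtain ⟨j, hj, rfl⟩ := mem_arc.1 hy
  have hjm : ¬ j + 1 < m := fun h => hy1 (by simpa [add_assoc] using add_natCast_mem_arc b h)
  rw [show m - 1 = j by omega]

lemma eq_sub_one_or_eq_add_of_insert_eq_arc {b c x : ZMod n} {k : ℕ} (hk : 1 ≤ k) (hkn : k < n)
    (h : insert x (arc c k) = arc b (k + 1)) : x = c - 1 ∨ x = c + k := by
  by_cases hnext : c + k ∈ arc b (k + 1)
  · rw [← h, mem_insert, add_natCast_mem_arc_iff hkn hkn.le] at hnext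
    exact Or.inr (hnext.resolve_right (lt_irrefl k)).symm
  · have hlast : c + (k - 1 : ℕ) ∈ arc b (k + 1) :=
      h ▸ mem_insert_of_mem (add_natCast_mem_arc c (by omega))
    have hcb := eq_add_of_mem_arc_of_add_one_notMem hlast (by
      rwa [Nat.cast_sub hk, Nat.cast_one, add_assoc, sub_add_cancel])
    have hb : b = c - 1 := by
      rw [Nat.cast_sub hk, Nat.add_sub_cancel] at hcb
      linear_combination -hcb
    have hbmem : b ∈ arc b (k + 1) := by simpa using add_natCast_mem_arc b k.succ_pos
    have hc : c - 1 ∉ arc c k := by simpa using sub_natCast_notMem_arc c (m := 1) le_rfl hkn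
    rw [← h, mem_insert, hb] at hbmem
    exact Or.inl (hbmem.resolve_right hc).symm

lemma eq_sub_one_or_eq_add_of_notMem_arc [NeZero n] {c x : ZMod n} {k : ℕ} (hkn : n ≤ k + 2)
    (hx : x ∉ arc c k) : x = c - 1 ∨ x = c + k := by
  have hxm : x = c + ((x - c).val : ZMod n) := by
    rw [ZMod.natCast_zmod_val]
    ring
  have hm : (x - c).val < n := ZMod.val_lt _
  have hkm : k ≤ (x - c).val := by
    by_contra h
    exact hx (hxm ▸ add_natCast_mem_arc c (by omega))
  rcases (show (x - c).val = k ∨ (x - c).val = n - 1 by omega) with h | h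
  · rw [hxm, h]
    exact Or.inr rfl
  · left
    rw [hxm, h, ← sub_natCast_eq_add c NeZero.one_le, Nat.cast_one]

/-- Left endpoint, after `k` steps, of the arc grown from the empty arc at `a` by adding at step
`k` the point on its left if `ε k`, on its right otherwise. -/
def arcStart (a : ZMod n) (ε : ℕ → Bool) : ℕ → ZMod n
  | 0 => a
  | k + 1 => if ε k then arcStart a ε k - 1 else arcStart a ε k

def arcWord (a : ZMod n) (ε : ℕ → Bool) (q : ℕ) : ZMod n :=
  if ε q then arcStart a ε q - 1 else arcStart a ε q + q

lemma image_range_arcWord (a : ZMod n) (ε : ℕ → Bool) (k : ℕ) :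
    (range k).image (arcWord a ε) = arc (arcStart a ε k) k := by
  induction k with
  | zero => rfl
  | succ k ih =>
    rw [range_add_one, image_insert, ih, arcWord, arcStart]
    split_ifs
    · rw [arc_sub_one_add_one]
    · rw [arc_add_one]

lemma injOn_arcWord [NeZero n] (a : ZMod n) (ε : ℕ → Bool) :
    Set.InjOn (arcWord a ε) (range n) := by
  rw [← card_image_iff, image_range_arcWord, arc_eq_univ, card_univ, ZMod.card, card_range]

end SignedArc

open SignedArc

lemma IsSignedPerm.ext {w w' : Equiv.Perm (Fin n × Bool)} (hw : IsSignedPerm w)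
    (hw' : IsSignedPerm w') (h : ∀ q, w (q, false) = w' (q, false)) : w = w' := by
  refine Equiv.ext fun ⟨q, c⟩ => ?_
  cases c
  · exact h q
  · have hq := hw (q, false)
    have hq' := hw' (q, false)
    rw [Bool.not_false] at hq hq'
    rw [hq, hq', h q]

lemma absValZ_eq_fst_add_one (w : Equiv.Perm (Fin n × Bool)) (q : Fin n) :
    absValZ n w q = ((w (q, false)).1 : ℕ) + 1 := by
  simp [absValZ, oneLine]

lemma IsSignedPerm.injOn_absValZ {w : Equiv.Perm (Fin n × Bool)} (hw : IsSignedPerm w) :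
    Set.InjOn (absValZ n w) (range n) := by
  intro q hq q' hq' h
  rw [coe_range, Set.mem_Iio] at hq hq'
  simp only [absValZ, oneLine, dif_pos hq, dif_pos hq', Nat.cast_add, Nat.cast_one,
    add_left_inj] at h
  have hfst : (w (⟨q, hq⟩, false)).1 = (w (⟨q', hq'⟩, false)).1 := by
    have := congrArg ZMod.val h
    rwa [ZMod.val_natCast_of_lt (Fin.isLt _), ZMod.val_natCast_of_lt (Fin.isLt _),
      Fin.val_inj] at this
  obtain ⟨b, hb⟩ : ∃ b, w (⟨q, hq⟩, false) = w (⟨q', hq'⟩, b) := by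
    by_cases hsnd : (w (⟨q, hq⟩, false)).2 = (w (⟨q', hq'⟩, false)).2
    · exact ⟨false, Prod.ext hfst hsnd⟩
    · refine ⟨true, ?_⟩
      rw [← Bool.not_false, hw (⟨q', hq'⟩, false)]
      exact Prod.ext hfst (Bool.eq_not_iff.2 hsnd)
  simpa using congrArg (fun p => (p.1 : ℕ)) (w.injective hb)

section OfWord

variable [NeZero n]

/-- Position `q` carries the letter `v q ∈ ℤ_n` (with `0` read as `n`), barred iff `ε q`. -/
def signedPermOfWordFun (v : ℕ → ZMod n) (ε : Fin n → Bool) (p : Fin n × Bool) :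
    Fin n × Bool :=
  (⟨(v p.1 - 1).val, ZMod.val_lt _⟩, xor p.2 (ε p.1))

lemma signedPermOfWordFun_injective {v : ℕ → ZMod n} (hv : Set.InjOn v (range n))
    (ε : Fin n → Bool) : Function.Injective (signedPermOfWordFun v ε) := by
  rintro ⟨q, c⟩ ⟨q', c'⟩ h
  simp only [signedPermOfWordFun, Prod.mk.injEq, Fin.mk.injEq] at h
  obtain rfl : q = q' :=
    Fin.ext (hv (by simp) (by simp) (sub_left_inj.1 (ZMod.val_injective _ h.1)))
  simpa using h.2

noncomputable def signedPermOfWord {v : ℕ → ZMod n} (hv : Set.InjOn v (range n))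
    (ε : Fin n → Bool) : Equiv.Perm (Fin n × Bool) :=
  Equiv.ofBijective _ (signedPermOfWordFun_injective hv ε).bijective_of_finite

variable {v : ℕ → ZMod n} (hv : Set.InjOn v (range n)) (ε : Fin n → Bool)

lemma isSignedPerm_signedPermOfWord : IsSignedPerm (signedPermOfWord hv ε) := by
  rintro ⟨q, c⟩
  simp only [signedPermOfWord, Equiv.ofBijective_apply, signedPermOfWordFun]
  cases c <;> cases ε q <;> rfl

lemma absValZ_signedPermOfWord {q : ℕ} (hq : q < n) :
    absValZ n (signedPermOfWord hv ε) q = v q := by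
  simp [absValZ, oneLine, hq, signedPermOfWord, signedPermOfWordFun]

lemma oneLine_signedPermOfWord_snd {q : ℕ} (hq : q < n) :
    (oneLine (signedPermOfWord hv ε) q).2 = ε ⟨q, hq⟩ := by
  simp [oneLine, hq, signedPermOfWord, signedPermOfWordFun]

end OfWord

lemma isSignedArc_iff {w : Equiv.Perm (Fin n × Bool)} :
    IsSignedArc w ↔ ∀ k, 1 ≤ k → k + 2 ≤ n →
      (∃ b, (range k).image (absValZ n w) = arc b k) ∧
      (absValZ n w k - 1 ∈ (range k).image (absValZ n w) → (oneLine w k).2 = false) ∧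
      (absValZ n w k + 1 ∈ (range k).image (absValZ n w) → (oneLine w k).2 = true) := by
  constructor
  · intro h k hk hkn
    have := h (k + 1) (by omega) (by omega)
    rwa [Nat.add_sub_cancel] at this
  · intro h i hi hin
    obtain ⟨k, rfl⟩ : ∃ k, i = k + 1 := ⟨i - 1, by omega⟩
    rw [Nat.add_sub_cancel]
    exact h k (by omega) (by omega)

lemma IsSignedArc.absValZ_eq_of_image_range {w : Equiv.Perm (Fin n × Bool)}
    (hs : IsSignedPerm w) (ha : IsSignedArc w) {k : ℕ} {c : ZMod n} (hk : 1 ≤ k) (hkn : k < n)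
    (hpre : (range k).image (absValZ n w) = arc c k) :
    absValZ n w k = if (oneLine w k).2 then c - 1 else c + k := by
  have : NeZero n := ⟨by omega⟩
  rw [isSignedArc_iff] at ha
  have hadj : absValZ n w k = c - 1 ∨ absValZ n w k = c + k := by
    by_cases hk3 : k + 3 ≤ n
    · obtain ⟨b, hb⟩ := (ha (k + 1) (by omega) hk3).1
      rw [range_add_one, image_insert, hpre] at hb
      exact eq_sub_one_or_eq_add_of_insert_eq_arc hk hkn hb
    · refine eq_sub_one_or_eq_add_of_notMem_arc (by omega) fun hmem => ?_
      obtain ⟨j, hj, hjk⟩ := mem_image.1 (hpre ▸ hmem)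
      rw [mem_range] at hj
      exact hj.ne (hs.injOn_absValZ (by simpa using hj.trans hkn) (by simpa) hjk)
  by_cases hlast : k + 1 = n
  · have hends : c - 1 = c + k := by
      rw [← Nat.cast_one, sub_natCast_eq_add c (by omega), show n - 1 = k by omega]
    rw [hends, or_self] at hadj
    rw [hends, ite_self, hadj]
  · obtain ⟨-, hfalse, htrue⟩ := ha k hk (by omega)
    rcases hadj with h | h
    · rw [htrue (by simpa [hpre, h] using add_natCast_mem_arc c hk), if_pos rfl, h]
    · have hprev : absValZ n w k - 1 = c + (k - 1 : ℕ) := by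
        rw [h, Nat.cast_sub hk, Nat.cast_one, add_sub_assoc]
      rw [hfalse (by rw [hpre, hprev]; exact add_natCast_mem_arc c (by omega)), h]
      rfl

lemma IsSignedArc.absValZ_eq_arcWord {w : Equiv.Perm (Fin n × Bool)} (hs : IsSignedPerm w)
    (ha : IsSignedArc w) {q : ℕ} (hq : q < n) :
    absValZ n w q = arcWord (absValZ n w 0 + if (oneLine w 0).2 then 1 else 0)
      (fun p => (oneLine w p).2) q := by
  induction q using Nat.strong_induction_on with
  | _ q ih =>
  rcases Nat.eq_zero_or_pos q with rfl | hq1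
  · cases h : (oneLine w 0).2 <;> simp [arcWord, arcStart, h]
  · refine ha.absValZ_eq_of_image_range hs hq1 hq ?_
    rw [← image_range_arcWord]
    exact image_congr fun p hp => ih p (mem_range.1 hp) ((mem_range.1 hp).trans hq)

section OfArc

variable [NeZero n]

def signExt (ε : Fin n → Bool) (q : ℕ) : Bool :=
  if h : q < n then ε ⟨q, h⟩ else false

noncomputable def signedArcOf (a : ZMod n) (ε : Fin n → Bool) : Equiv.Perm (Fin n × Bool) :=
  signedPermOfWord (injOn_arcWord a (signExt ε)) ε

lemma isSignedArc_signedArcOf (a : ZMod n) (ε : Fin n → Bool) :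
    IsSignedArc (signedArcOf a ε) := by
  rw [isSignedArc_iff]
  intro k hk hkn
  have habs : ∀ q < n, absValZ n (signedArcOf a ε) q = arcWord a (signExt ε) q :=
    fun q hq => absValZ_signedPermOfWord _ ε hq
  have hsign : (oneLine (signedArcOf a ε) k).2 = signExt ε k := by
    rw [signedArcOf, oneLine_signedPermOfWord_snd _ ε (by omega), signExt, dif_pos]
  have hpre :
      (range k).image (absValZ n (signedArcOf a ε)) = arc (arcStart a (signExt ε) k) k := by
    rw [← image_range_arcWord]
    exact image_congr fun q hq => habs q ((mem_range.1 hq).trans (by omega))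
  rw [hpre, habs k (by omega), hsign, arcWord]
  refine ⟨⟨_, rfl⟩, fun h => ?_, fun h => ?_⟩
  · by_contra hε
    rw [Bool.not_eq_false] at hε
    rw [if_pos hε, sub_sub, one_add_one_eq_two, ← Nat.cast_ofNat] at h
    exact sub_natCast_notMem_arc _ (by norm_num) hkn h
  · by_contra hε
    rw [Bool.not_eq_true] at hε
    rw [if_neg (by simp [hε]), add_assoc, ← Nat.cast_add_one,
      add_natCast_mem_arc_iff (by omega) (by omega)] at h
    omega

lemma signedArcOf_injective :
    Function.Injective fun p : ZMod n × (Fin n → Bool) => signedArcOf p.1 p.2 := by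
  rintro ⟨a, ε⟩ ⟨a', ε'⟩ h
  simp only at h
  obtain rfl : ε = ε' := funext fun q => by
    rw [← oneLine_signedPermOfWord_snd (injOn_arcWord a (signExt ε)) ε q.isLt,
      ← oneLine_signedPermOfWord_snd (injOn_arcWord a' (signExt ε')) ε' q.isLt]
    exact congrArg (fun w => (oneLine w q).2) h
  have h0 := congrArg (fun w => absValZ n w 0) h
  simp only [signedArcOf, absValZ_signedPermOfWord _ ε (NeZero.pos n), arcWord, arcStart] at h0
  split_ifs at h0 <;> simpa using h0

lemma exists_signedArcOf_eq {w : Equiv.Perm (Fin n × Bool)} (hs : IsSignedPerm w)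
    (ha : IsSignedArc w) : ∃ a ε, signedArcOf a ε = w := by
  set ε : Fin n → Bool := fun q => (w (q, false)).2
  have hε : signExt ε = fun p => (oneLine w p).2 := funext fun p => by
    unfold signExt oneLine
    split_ifs <;> rfl
  refine ⟨absValZ n w 0 + if (oneLine w 0).2 then 1 else 0, ε,
    IsSignedPerm.ext (isSignedPerm_signedPermOfWord _ ε) hs fun q => ?_⟩
  have hq := ha.absValZ_eq_arcWord hs q.isLt
  rw [← hε] at hq
  simp only [signedArcOf, signedPermOfWord, Equiv.ofBijective_apply, signedPermOfWordFun]
  refine Prod.ext (Fin.ext ?_) (Bool.false_xor _)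
  dsimp only
  rw [← hq, absValZ_eq_fst_add_one, add_sub_cancel_right, ZMod.val_natCast_of_lt (Fin.isLt _)]

noncomputable def signedArcEquiv :
    ZMod n × (Fin n → Bool) ≃
      { w : Equiv.Perm (Fin n × Bool) // IsSignedPerm w ∧ IsSignedArc w } :=
  Equiv.ofBijective
    (fun p => ⟨signedArcOf p.1 p.2, isSignedPerm_signedPermOfWord _ _,
      isSignedArc_signedArcOf _ _⟩)
    ⟨fun _ _ h => signedArcOf_injective (congrArg Subtype.val h), fun ⟨_, hs, ha⟩ =>
      let ⟨a, ε, h⟩ := exists_signedArcOf_eq hs ha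
      ⟨(a, ε), Subtype.ext h⟩⟩

end OfArc

/-- For `n ≥ 2`, the number of signed arc permutations in `B_n` equals `n · 2^n`. -/
theorem card_signedArc (n : ℕ) (hn : 2 ≤ n) :
    Nat.card { w : Equiv.Perm (Fin n × Bool) // IsSignedPerm w ∧ IsSignedArc w }
      = n * 2 ^ n := by
  have : NeZero n := ⟨by omega⟩
  rw [← Nat.card_congr signedArcEquiv]
  simp
end

section
/- For every odd positive integer k and every positive integer n, the generating function identity Σ_{d | k} Σ_{n ≥ 1} (1/n) L^B_d(x^n, y^n) t^{nd} = Σ_{n ≥ 1} (1/(2n)) ( (p⁺_{n/(n,k)}(x,y))^{(n,k)} + (p⁻_{n/(n,k)}(x,y))^{(n,k)} ) t^n holds, where (n,k) = gcd(n,k). -/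
open Finset Classical

/-- The coefficient of the monomial `m` (in variables `x_i = (false, i)`,
`y_i = (true, i)`) in the `j`-th power of the "mixed" power sum
`Σ_i (x_i^e + c · y_i^e)`.  For `c = 1` this is `(p⁺_e(x,y))^j`, for `c = −1` it is
`(p⁻_e(x,y))^j`, and for `c = (−1)^e` it is `(p_e(x,−y))^j`. -/
noncomputable def pmixPowCoeff (c : ℚ) (e j : ℕ) (m : (Bool × ℕ) →₀ ℕ) : ℚ :=
  ∑ᶠ g : Fin j → Bool × ℕ,
    if (∑ i : Fin j, Finsupp.single (g i) e) = m then
      c ^ (Finset.univ.filter fun i : Fin j => (g i).1 = true).card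
    else 0

/-- The coefficient of the monomial `m` in `L^B_d(x,y) = (L_d(x,y) + L_d(x,−y))/2`,
the generating function of primitive necklaces of length `d` over the alphabet
`{x_i} ∪ {y_i}` with an even number of `y` variables, where
`L_d = (1/d) Σ_{e | d} μ(e) (p_e)^{d/e}` (with `μ` the number-theoretic Möbius
function). -/
noncomputable def LBCoeff (d : ℕ) (m : (Bool × ℕ) →₀ ℕ) : ℚ :=
  (1 / (2 * (d : ℚ))) *
    ∑ e ∈ d.divisors,
      ((ArithmeticFunction.moebius e : ℤ) : ℚ) *
        (pmixPowCoeff 1 e (d / e) m + pmixPowCoeff ((-1 : ℚ) ^ e) e (d / e) m)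

/-- The coefficient of the monomial `m` in `f(x^r, y^r)`, the substitution of every
variable by its `r`-th power in the series with coefficient function `f`. -/
noncomputable def substPowCoeff (f : ((Bool × ℕ) →₀ ℕ) → ℚ) (r : ℕ)
    (m : (Bool × ℕ) →₀ ℕ) : ℚ :=
  ∑ᶠ m' : (Bool × ℕ) →₀ ℕ, if r • m' = m then f m' else 0

/-! Substituting `x ↦ x^r, y ↦ y^r` sends the power sum `p_e` to `p_{re}`, so every
`L^B_d(x^r, y^r)` is a Möbius combination of the products `(p^±_{N/j})^j` with `j ∣ d`; the
odd exponents `e ∣ k` turn `p_e(x,−y)` into `p⁻_e(x,y)`. Summing over `d ∣ gcd(N,k)`, Möbius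
inversion collapses everything to the single term `j = gcd(N,k)`. -/

abbrev Monomial := (Bool × ℕ) →₀ ℕ

lemma sum_single_mul {j : ℕ} (g : Fin j → Bool × ℕ) (r e : ℕ) :
    (∑ i : Fin j, Finsupp.single (g i) (r * e)) = r • ∑ i : Fin j, Finsupp.single (g i) e := by
  simp only [Finset.smul_sum, Finsupp.smul_single, smul_eq_mul]

lemma substPowCoeff_nsmul (f : Monomial → ℚ) {r : ℕ} (hr : r ≠ 0) (m₀ : Monomial) :
    substPowCoeff f r (r • m₀) = f m₀ := by
  rw [substPowCoeff, finsum_eq_single _ m₀ fun m' hm' =>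
    if_neg fun h => hm' (nsmul_right_injective hr h),
    if_pos rfl]

lemma substPowCoeff_eq_zero (f : Monomial → ℚ) {r : ℕ} {m : Monomial}
    (hm : ∀ m₀, r • m₀ ≠ m) : substPowCoeff f r m = 0 :=
  finsum_eq_zero_of_forall_eq_zero fun m' => if_neg (hm m')

lemma pmixPowCoeff_mul_nsmul (c : ℚ) (e j : ℕ) {r : ℕ} (hr : r ≠ 0) (m₀ : Monomial) :
    pmixPowCoeff c (r * e) j (r • m₀) = pmixPowCoeff c e j m₀ := by
  refine finsum_congr fun g => if_congr ?_ rfl rfl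
  rw [sum_single_mul]
  exact (nsmul_right_injective hr).eq_iff

lemma pmixPowCoeff_mul_eq_zero (c : ℚ) (e j : ℕ) {r : ℕ} {m : Monomial}
    (hm : ∀ m₀, r • m₀ ≠ m) : pmixPowCoeff c (r * e) j m = 0 :=
  finsum_eq_zero_of_forall_eq_zero fun g => if_neg (sum_single_mul g r e ▸ hm _)

lemma substPowCoeff_LBCoeff (d : ℕ) {r : ℕ} (hr : r ≠ 0) (m : Monomial) :
    substPowCoeff (LBCoeff d) r m
      = 1 / (2 * (d : ℚ)) * ∑ e ∈ d.divisors, ((ArithmeticFunction.moebius e : ℤ) : ℚ) *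
          (pmixPowCoeff 1 (r * e) (d / e) m + pmixPowCoeff ((-1) ^ e) (r * e) (d / e) m) := by
  by_cases hm : ∃ m₀, r • m₀ = m
  · obtain ⟨m₀, rfl⟩ := hm
    simp only [substPowCoeff_nsmul _ hr, LBCoeff, pmixPowCoeff_mul_nsmul _ _ _ hr]
  · push Not at hm
    simp [substPowCoeff_eq_zero _ hm, pmixPowCoeff_mul_eq_zero _ _ _ hm]

/-- The coefficient of `m` in `(p⁺_{N/j})^j + (p⁻_{N/j})^j`. -/
noncomputable def plusMinusPowCoeff (N j : ℕ) (m : Monomial) : ℚ :=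
  pmixPowCoeff 1 (N / j) j m + pmixPowCoeff (-1) (N / j) j m

lemma Nat.div_mul_eq_div_div {N d e : ℕ} (hN : N ≠ 0) (hdN : d ∣ N) (hed : e ∣ d) :
    N / d * e = N / (d / e) := by
  have hd : 0 < d := Nat.pos_of_dvd_of_pos hdN (Nat.pos_of_ne_zero hN)
  have he : 0 < e := Nat.pos_of_dvd_of_pos hed hd
  refine (Nat.div_eq_of_eq_mul_left (Nat.div_pos (Nat.le_of_dvd hd hed) he) ?_).symm
  rw [mul_assoc, Nat.mul_div_cancel' hed, Nat.div_mul_cancel hdN]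

lemma div_mul_substPowCoeff_LBCoeff {N d : ℕ} (hN : N ≠ 0) (hdN : d ∣ N) (hd : Odd d)
    (m : Monomial) :
    (d : ℚ) / N * substPowCoeff (LBCoeff d) (N / d) m
      = 1 / (2 * (N : ℚ)) * ∑ x ∈ d.divisorsAntidiagonal,
          ArithmeticFunction.moebius x.1 • plusMinusPowCoeff N x.2 m := by
  have hd0 : (d : ℚ) ≠ 0 := Nat.cast_ne_zero.mpr hd.pos.ne'
  have hN0 : (N : ℚ) ≠ 0 := Nat.cast_ne_zero.mpr hN
  have hterm : ∀ e ∈ d.divisors, ((ArithmeticFunction.moebius e : ℤ) : ℚ) *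
      (pmixPowCoeff 1 (N / d * e) (d / e) m + pmixPowCoeff ((-1) ^ e) (N / d * e) (d / e) m)
        = ArithmeticFunction.moebius e • plusMinusPowCoeff N (d / e) m := by
    intro e he
    have hed := Nat.dvd_of_mem_divisors he
    rw [(hd.of_dvd_nat hed).neg_one_pow, Nat.div_mul_eq_div_div hN hdN hed, zsmul_eq_mul,
      plusMinusPowCoeff]
  rw [substPowCoeff_LBCoeff d (Nat.div_pos (Nat.le_of_dvd (Nat.pos_of_ne_zero hN) hdN)
    hd.pos).ne', sum_congr rfl hterm, Nat.sum_divisorsAntidiagonal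
    (fun e j => ArithmeticFunction.moebius e • plusMinusPowCoeff N j m)]
  field_simp

lemma Nat.sum_divisors_sum_moebius_smul {R : Type*} [AddCommGroup R] (g : ℕ → R) {n : ℕ}
    (hn : 0 < n) :
    ∑ d ∈ n.divisors, ∑ x ∈ d.divisorsAntidiagonal, ArithmeticFunction.moebius x.1 • g x.2 =
      g n :=
  ArithmeticFunction.sum_eq_iff_sum_smul_moebius_eq.mpr (fun _ _ => rfl) n hn

lemma Nat.filter_dvd_divisors {k : ℕ} (hk : k ≠ 0) (N : ℕ) :
    {d ∈ k.divisors | d ∣ N} = (N.gcd k).divisors := by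
  ext d
  have := Nat.gcd_ne_zero_right (m := N) hk
  simp only [mem_filter, Nat.mem_divisors, Nat.dvd_gcd_iff]
  tauto

/-- Coefficient of `t^N`: the pairs `(d, n)` with `nd = N` are the divisors `d` of both `k`
and `N`, with `n = N/d`. -/
theorem necklace_generating_identity_general (k : ℕ) (hk : Odd k)
    (N : ℕ) (hN : 1 ≤ N) (m : (Bool × ℕ) →₀ ℕ) :
    (∑ d ∈ k.divisors.filter (· ∣ N), ((d : ℚ) / (N : ℚ)) * substPowCoeff (LBCoeff d) (N / d) m)
      = (1 / (2 * (N : ℚ))) *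
          (pmixPowCoeff 1 (N / Nat.gcd N k) (Nat.gcd N k) m
            + pmixPowCoeff (-1) (N / Nat.gcd N k) (Nat.gcd N k) m) := by
  have hN0 : N ≠ 0 := Nat.one_le_iff_ne_zero.mp hN
  rw [Nat.filter_dvd_divisors hk.pos.ne' N, sum_congr rfl fun d hd =>
      div_mul_substPowCoeff_LBCoeff hN0 ((Nat.dvd_of_mem_divisors hd).trans (N.gcd_dvd_left k))
        (hk.of_dvd_nat ((Nat.dvd_of_mem_divisors hd).trans (N.gcd_dvd_right k))) m,
    ← mul_sum, Nat.sum_divisors_sum_moebius_smul (plusMinusPowCoeff N · m)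
      (Nat.gcd_pos_of_pos_left k hN)]
  rfl

/-- For every odd positive integer `k`, the generating function identity
`Σ_{d | k} Σ_{n ≥ 1} (1/n) L^B_d(x^n, y^n) t^{nd}
  = Σ_{n ≥ 1} (1/(2n)) ((p⁺_{n/(n,k)}(x,y))^{(n,k)} + (p⁻_{n/(n,k)}(x,y))^{(n,k)}) t^n`
holds; equivalently, the coefficients of `t^N` agree for every `N ≥ 1` (the pairs
`(d, n)` with `nd = N` are the divisors `d` of both `k` and `N`, with `n = N/d`). -/
theorem necklace_generating_identity (k : ℕ) (hk : Odd k) (hk0 : 0 < k)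
    (N : ℕ) (hN : 1 ≤ N) (m : (Bool × ℕ) →₀ ℕ) :
    (∑ d ∈ k.divisors.filter (· ∣ N), ((d : ℚ) / (N : ℚ)) * substPowCoeff (LBCoeff d) (N / d) m)
      = (1 / (2 * (N : ℚ))) *
          (pmixPowCoeff 1 (N / Nat.gcd N k) (Nat.gcd N k) m
            + pmixPowCoeff (-1) (N / Nat.gcd N k) (Nat.gcd N k) m) :=
  necklace_generating_identity_general k hk N hN m
end
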